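/- arXiv:1701.08703 — 2 statements merged into one kernel-verified Lean document; each statement's English description precedes it below -/
import Mathlib

section
/- Let (S, V) be a complete semiring-semimodule pair, let M ∈ (S^{n×n})^{p*×p*} be a restricted one-counter (roc) matrix with counter symbol p, and let 0 ≤ k ≤ n. Then (M^{ω,k})_{p²} = (M^{ω,k})_p + (M*)_{p,ε} · (M^{ω,k})_p. -/
/-!
Common definitions: complete semirings with infinite sums, complete
semiring-semimodule pairs with infinite products, restricted one-counter
(roc) matrices, their star and omega blocks, power series over finite and
infinite words, weighted ω-restricted one-counter automata, and the mixed
context-free grammars obtained by the triple-pair construction.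
-/

/-- The data of a semiring together with sums over arbitrary index sets. -/
structure CSOps (S : Type) where
  add : S → S → S
  mul : S → S → S
  zero : S
  one : S
  iSum : ∀ {ι : Type}, (ι → S) → S

namespace CSOps

variable {S : Type}

/-- Powers `a^m`. -/
def pow (R : CSOps S) (a : S) : ℕ → S
  | 0 => R.one
  | m + 1 => R.mul a (R.pow a m)

/-- The star operation of a complete starsemiring: `a* = Σ_{m≥0} a^m`. -/
def star (R : CSOps S) (a : S) : S := R.iSum fun m : ℕ => R.pow a m

/-- Finite sums of lists of elements. -/
def listSum (R : CSOps S) (l : List S) : S := l.foldr R.add R.zero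

/-- Finite (ordered) products of lists of elements. -/
def listProd (R : CSOps S) (l : List S) : S := l.foldr R.mul R.one

/-- The ordered product `s_a · s_{a+1} ⋯ s_{b-1}`. -/
def rangeProd (R : CSOps S) (s : ℕ → S) (a b : ℕ) : S :=
  R.listProd ((List.range' a (b - a)).map s)

/-- `R` is a complete semiring: the operations form a semiring, the infinite
sums extend the finite ones, are associative and commutative (compatible with
arbitrary partitions of the index set) and satisfy both distributive laws. -/
structure IsComplete (R : CSOps S) : Prop where
  add_assoc : ∀ a b c, R.add (R.add a b) c = R.add a (R.add b c)
  add_comm : ∀ a b, R.add a b = R.add b a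
  zero_add : ∀ a, R.add R.zero a = a
  mul_assoc : ∀ a b c, R.mul (R.mul a b) c = R.mul a (R.mul b c)
  one_mul : ∀ a, R.mul R.one a = a
  mul_one : ∀ a, R.mul a R.one = a
  zero_mul : ∀ a, R.mul R.zero a = R.zero
  mul_zero : ∀ a, R.mul a R.zero = R.zero
  left_distrib : ∀ a b c, R.mul a (R.add b c) = R.add (R.mul a b) (R.mul a c)
  right_distrib : ∀ a b c, R.mul (R.add a b) c = R.add (R.mul a c) (R.mul b c)
  iSum_empty : ∀ {ι : Type} (f : ι → S), IsEmpty ι → R.iSum f = R.zero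
  iSum_single : ∀ {ι : Type} (f : ι → S) (i₀ : ι), (∀ i, i = i₀) → R.iSum f = f i₀
  iSum_pair : ∀ {ι : Type} (f : ι → S) (i₀ i₁ : ι), i₀ ≠ i₁ → (∀ i, i = i₀ ∨ i = i₁) →
      R.iSum f = R.add (f i₀) (f i₁)
  iSum_partition : ∀ {ι κ : Type} (g : ι → κ) (f : ι → S),
      R.iSum (fun j : κ => R.iSum (fun i : {i : ι // g i = j} => f i.1)) = R.iSum f
  mul_iSum : ∀ {ι : Type} (c : S) (f : ι → S), R.mul c (R.iSum f) = R.iSum fun i => R.mul c (f i)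
  iSum_mul : ∀ {ι : Type} (c : S) (f : ι → S), R.mul (R.iSum f) c = R.iSum fun i => R.mul (f i) c

/-- `R` is a continuous starsemiring: it is complete and every infinite sum is
the least upper bound, with respect to the natural order `a ≤ b ↔ ∃ c, a + c = b`,
of the sums over the finite subfamilies. -/
structure IsContinuous (R : CSOps S) : Prop where
  complete : R.IsComplete
  finsumLe : ∀ {ι : Type} (f : ι → S) (l : List ι), l.Nodup →
      ∃ c, R.add (R.listSum (l.map f)) c = R.iSum f
  iSumLeast : ∀ {ι : Type} (f : ι → S) (b : S),
      (∀ l : List ι, l.Nodup → ∃ c, R.add (R.listSum (l.map f)) c = b) →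
      ∃ c, R.add (R.iSum f) c = b

end CSOps

/-- The data of a left `S`-semimodule `V` with sums over arbitrary index sets and
an infinite product operation mapping infinite sequences over `S` to `V`. -/
structure CPOps (S V : Type) where
  vadd : V → V → V
  vzero : V
  smul : S → V → V
  vSum : ∀ {ι : Type}, (ι → V) → V
  iProd : (ℕ → S) → V

namespace CPOps

variable {S V : Type}

/-- `(S, V)` (with operations `R`, `P`) is a complete semiring-semimodule pair. -/
structure IsComplete (R : CSOps S) (P : CPOps S V) : Prop where
  vadd_assoc : ∀ u v w, P.vadd (P.vadd u v) w = P.vadd u (P.vadd v w)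
  vadd_comm : ∀ u v, P.vadd u v = P.vadd v u
  vzero_vadd : ∀ v, P.vadd P.vzero v = v
  mul_smul : ∀ a b v, P.smul (R.mul a b) v = P.smul a (P.smul b v)
  one_smul : ∀ v, P.smul R.one v = v
  add_smul : ∀ a b v, P.smul (R.add a b) v = P.vadd (P.smul a v) (P.smul b v)
  smul_vadd : ∀ a u v, P.smul a (P.vadd u v) = P.vadd (P.smul a u) (P.smul a v)
  zero_smul : ∀ v, P.smul R.zero v = P.vzero
  smul_vzero : ∀ a, P.smul a P.vzero = P.vzero
  vSum_empty : ∀ {ι : Type} (f : ι → V), IsEmpty ι → P.vSum f = P.vzero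
  vSum_single : ∀ {ι : Type} (f : ι → V) (i₀ : ι), (∀ i, i = i₀) → P.vSum f = f i₀
  vSum_pair : ∀ {ι : Type} (f : ι → V) (i₀ i₁ : ι), i₀ ≠ i₁ → (∀ i, i = i₀ ∨ i = i₁) →
      P.vSum f = P.vadd (f i₀) (f i₁)
  vSum_partition : ∀ {ι κ : Type} (g : ι → κ) (f : ι → V),
      P.vSum (fun j : κ => P.vSum (fun i : {i : ι // g i = j} => f i.1)) = P.vSum f
  smul_vSum : ∀ {ι : Type} (a : S) (f : ι → V),
      P.smul a (P.vSum f) = P.vSum fun i => P.smul a (f i)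
  iSum_smul : ∀ {ι : Type} (f : ι → S) (v : V),
      P.smul (R.iSum f) v = P.vSum fun i => P.smul (f i) v
  iProd_regroup : ∀ (s : ℕ → S) (e : ℕ → ℕ), e 0 = 0 → Monotone e →
      P.iProd s = P.iProd fun i => R.rangeProd s (e i) (e (i + 1))
  smul_iProd_shift : ∀ s : ℕ → S, P.smul (s 0) (P.iProd fun i => s (i + 1)) = P.iProd s
  iProd_iSum : ∀ (I : ℕ → Type) (s : ∀ j, I j → S),
      P.iProd (fun j => R.iSum (s j)) = P.vSum fun f : (∀ j, I j) => P.iProd fun j => s j (f j)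

end CPOps

/-! ### Matrices of blocks indexed by the counter contents `p^i ↔ i` -/

/-- An `n × n` block of weights. -/
abbrev Blk (n : ℕ) (S : Type) := Fin n → Fin n → S

def bZero {S : Type} (R : CSOps S) {n : ℕ} : Blk n S := fun _ _ => R.zero

def bOne {S : Type} (R : CSOps S) {n : ℕ} : Blk n S :=
  fun i j => if i = j then R.one else R.zero

def bAdd {S : Type} (R : CSOps S) {n : ℕ} (X Y : Blk n S) : Blk n S :=
  fun i j => R.add (X i j) (Y i j)

def bMul {S : Type} (R : CSOps S) {n : ℕ} (X Y : Blk n S) : Blk n S :=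
  fun i j => R.iSum fun l : Fin n => R.mul (X i l) (Y l j)

def bPow {S : Type} (R : CSOps S) {n : ℕ} (X : Blk n S) : ℕ → Blk n S
  | 0 => bOne R
  | m + 1 => bMul R X (bPow R X m)

/-- A matrix in `(S^{n×n})^{p* × p*}`: rows and columns are indexed by the words
`p^i` (identified with `i : ℕ`) and the entries are `n × n` blocks over `S`. -/
abbrev IMat (n : ℕ) (S : Type) := ℕ → ℕ → Blk n S

def iMatMul {S : Type} (R : CSOps S) {n : ℕ} (M N : IMat n S) : IMat n S :=
  fun i j => fun a b => R.iSum fun l : ℕ => bMul R (M i l) (N l j) a b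

def iMatOne {S : Type} (R : CSOps S) {n : ℕ} : IMat n S :=
  fun i j => if i = j then bOne R else bZero R

def iMatPow {S : Type} (R : CSOps S) {n : ℕ} (M : IMat n S) : ℕ → IMat n S
  | 0 => iMatOne R
  | m + 1 => iMatMul R M (iMatPow R M m)

/-- `iStar R M i j` is the block `(M*)_{p^i, p^j} = Σ_{m≥0} (M^m)_{p^i, p^j}`. -/
def iStar {S : Type} (R : CSOps S) {n : ℕ} (M : IMat n S) : IMat n S :=
  fun i j => fun a b => R.iSum fun m : ℕ => iMatPow R M m i j a b

/-- `M` is a restricted one-counter (roc) matrix (with counter symbol `p`):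
there are blocks `A = M_{p,p²}`, `C = M_{p,p}`, `B = M_{p,ε}` with
`M_{p^k,p^{k+1}} = A`, `M_{p^k,p^k} = C`, `M_{p^k,p^{k-1}} = B` for all `k ≥ 1`,
and all other blocks are `0`. -/
def IsRoc {S : Type} (R : CSOps S) {n : ℕ} (M : IMat n S) : Prop :=
  (∀ k : ℕ, 1 ≤ k → M k (k + 1) = M 1 2 ∧ M k k = M 1 1 ∧ M k (k - 1) = M 1 0) ∧
  (∀ i j : ℕ, (i = 0 ∨ (j ≠ i + 1 ∧ j ≠ i ∧ j + 1 ≠ i)) → M i j = bZero R)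

/-! ### Vectors over the semimodule -/

def vecAdd {S V : Type} (P : CPOps S V) {n : ℕ} (u v : Fin n → V) : Fin n → V :=
  fun a => P.vadd (u a) (v a)

/-- A block acting on a vector of semimodule elements: `(X z)_a = Σ_l X_{a l} z_l`. -/
def matVec {S V : Type} (P : CPOps S V) {n : ℕ} (X : Blk n S) (v : Fin n → V) : Fin n → V :=
  fun a => P.vSum fun l : Fin n => P.smul (X a l) (v l)

/-- A row vector acting on a column vector of semimodule elements: `I z = Σ_m I_m z_m`. -/
def rowAct {S V : Type} (P : CPOps S V) {n : ℕ} (Iv : Fin n → S) (v : Fin n → V) : V :=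
  P.vSum fun m : Fin n => P.smul (Iv m) (v m)

/-- The scalar `I · X · P = Σ_{m₁,m₂} I_{m₁} X_{m₁ m₂} P_{m₂}`. -/
def tripleProd {S : Type} (R : CSOps S) {n : ℕ} (Iv : Fin n → S) (X : Blk n S)
    (Pv : Fin n → S) : S :=
  R.iSum fun q : Fin n × Fin n => R.mul (Iv q.1) (R.mul (X q.1 q.2) (Pv q.2))

/-- The sequence of weights along an infinite path starting in row block `p^i`,
state `j`, and then visiting the blocks `p^{hs 0}, p^{hs 1}, …` in states
`js 0, js 1, …`. -/
def pathEntry {S : Type} {n : ℕ} (M : IMat n S) (i : ℕ) (j : Fin n)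
    (hs : ℕ → ℕ) (js : ℕ → Fin n) : ℕ → S
  | 0 => M i (hs 0) j (js 0)
  | t + 1 => M (hs t) (hs (t + 1)) (js t) (js (t + 1))

/-- The block `(M^ω)_{p^i}` of the column vector `M^ω ∈ (V^n)^{p*}`:
`((M^ω)_{p^i})_j` is the sum over all infinite sequences of pushdown contents and
states of the infinite products of the corresponding entries of `M`. -/
def mOmega {S V : Type} (P : CPOps S V) {n : ℕ} (M : IMat n S) (i : ℕ) : Fin n → V :=
  fun j => P.vSum fun q : (ℕ → ℕ) × (ℕ → Fin n) => P.iProd (pathEntry M i j q.1 q.2)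

/-- `P_k`: the sequences of states (states `1,…,n` being represented by `Fin n`,
state `j+1` by `j : Fin n`) that are `≤ k` (i.e. have representative `< k`)
infinitely often — the Büchi condition with repeated states `{1, …, k}`. -/
def InPk (n k : ℕ) (js : ℕ → Fin n) : Prop := ∀ N : ℕ, ∃ t, N ≤ t ∧ (js t : ℕ) < k

/-- The block `(M^{ω,k})_{p^i}` of the column vector `M^{ω,k} ∈ (V^n)^{p*}`:
the sum over all infinite sequences `i₁, i₂, … ≥ 1` of pushdown contents and all
state sequences in `P_k` of the infinite products of the corresponding entries. -/
def mOmegaK {S V : Type} (P : CPOps S V) {n : ℕ} (M : IMat n S) (k : ℕ) (i : ℕ) :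
    Fin n → V :=
  fun j => P.vSum fun q : {q : (ℕ → ℕ) × (ℕ → Fin n) // (∀ t, 1 ≤ q.1 t) ∧ InPk n k q.2} =>
    P.iProd (pathEntry M i j q.1.1 q.1.2)

/-! ### The algebraic systems -/

/-- The right-hand side `A x x + C x + B` of the algebraic system
`x = M_{p,p²} x x + M_{p,p} x + M_{p,ε}`. -/
def quadRhs {S : Type} (R : CSOps S) {n : ℕ} (Ablk Cblk Bblk X : Blk n S) : Blk n S :=
  bAdd R (bAdd R (bMul R Ablk (bMul R X X)) (bMul R Cblk X)) Bblk

/-- `X` is a solution of `x = A x x + C x + B`. -/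
def IsQuadSol {S : Type} (R : CSOps S) {n : ℕ} (Ablk Cblk Bblk X : Blk n S) : Prop :=
  X = quadRhs R Ablk Cblk Bblk X

/-- The matrix `M_{p,p²} + M_{p,p²}(M*)_{p,ε} + M_{p,p}`. -/
def linMat {S : Type} (R : CSOps S) {n : ℕ} (M : IMat n S) : Blk n S :=
  bAdd R (bAdd R (M 1 2) (bMul R (M 1 2) (iStar R M 1 0))) (M 1 1)

/-- `z` is a solution of the linear equation
`z = (M_{p,p²} + M_{p,p²}(M*)_{p,ε} + M_{p,p}) z` over `V^n`. -/
def IsLinSol {S V : Type} (R : CSOps S) (P : CPOps S V) {n : ℕ} (M : IMat n S)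
    (z : Fin n → V) : Prop :=
  z = matVec P (linMat R M) z

/-- The right-hand side `A z + (A x) z + C z` of the linear system
`z = M_{p,p²} z + M_{p,p²} x z + M_{p,p} z`. -/
def zRhs {S V : Type} (R : CSOps S) (P : CPOps S V) {n : ℕ} (Ablk Cblk x : Blk n S)
    (z : Fin n → V) : Fin n → V :=
  vecAdd P (vecAdd P (matVec P Ablk z) (matVec P (bMul R Ablk x) z)) (matVec P Cblk z)

/-- The behavior `‖C‖ = (I (M*)_{p,ε} P, I (M^{ω,k})_p)` of an
`ω`-restricted one-counter automaton. -/
def rocBehavior {S V : Type} (R : CSOps S) (P : CPOps S V) {n : ℕ} (M : IMat n S)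
    (Iv Pv : Fin n → S) (k : ℕ) : S × V :=
  (tripleProd R Iv (iStar R M 1 0) Pv, rowAct P Iv (mOmegaK P M k 1))

/-! ### Power series over finite and infinite words -/

open Classical in
/-- The complete semiring `S⟪Σ*⟫` of power series over finite words,
with the Cauchy product. -/
noncomputable def finOps {S : Type} (R : CSOps S) (A : Type) : CSOps (List A → S) where
  add s t := fun w => R.add (s w) (t w)
  mul s t := fun w =>
    R.iSum fun u : {u : List A × List A // u.1 ++ u.2 = w} => R.mul (s u.1.1) (t u.1.2)
  zero := fun _ => R.zero
  one := fun w => if w = [] then R.one else R.zero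
  iSum f := fun w => R.iSum fun i => f i w

/-- Concatenation of a finite word with an ω-word. -/
def wcat {A : Type} (u : List A) (v : ℕ → A) : ℕ → A :=
  fun t => if h : t < u.length then u.get ⟨t, h⟩ else v (t - u.length)

/-- Lengths of the partial concatenations of a sequence of finite words. -/
def flen {A : Type} (f : ℕ → List A) : ℕ → ℕ
  | 0 => 0
  | m + 1 => flen f m + (f m).length

/-- `f 0, f 1, f 2, …` is a factorization of the ω-word `w` into finite words:
the concatenation `f 0 · f 1 · ⋯` equals `w`. -/
def IsFact {A : Type} (f : ℕ → List A) (w : ℕ → A) : Prop :=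
  (∀ N : ℕ, ∃ m, N ≤ flen f m) ∧
  (∀ (m i : ℕ) (h : i < (f m).length), (f m).get ⟨i, h⟩ = w (flen f m + i))

/-- The complete semimodule pair operations on `(S⟪Σ*⟫, S⟪Σ^ω⟫)`, for a complete
star-omega semiring `S` given by `R` (sums) and `P0` (the infinite product of
the complete semiring-semimodule pair `(S, S)`). -/
def omOps {S : Type} (R : CSOps S) (P0 : CPOps S S) (A : Type) :
    CPOps (List A → S) ((ℕ → A) → S) where
  vadd s t := fun w => R.add (s w) (t w)
  vzero := fun _ => R.zero
  smul s t := fun w =>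
    R.iSum fun u : {u : List A × (ℕ → A) // wcat u.1 u.2 = w} => R.mul (s u.1.1) (t u.1.2)
  vSum f := fun w => R.iSum fun i => f i w
  iProd s := fun w =>
    R.iSum fun f : {f : ℕ → List A // IsFact f w} => P0.iProd fun j => s j (f.1 j)

/-- A series is a polynomial supported on `Σ ∪ {ε}`, i.e. an element of
`S⟨Σ ∪ {ε}⟩`: its coefficients vanish on words of length `≥ 2`. -/
def PolySupp {S : Type} (R : CSOps S) {A : Type} (s : List A → S) : Prop :=
  ∀ w : List A, 2 ≤ w.length → s w = R.zero

/-! ### The mixed context-free grammar of the triple-pair construction -/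

/-- Variables for finite derivations: `x₀` and the triples `[i, p, j]`. -/
inductive XVar (n : ℕ) where
  | x0 : XVar n
  | tr : Fin n → Fin n → XVar n

/-- Variables for infinite derivations: `z₀` and the pairs `[i, p]`. -/
inductive ZVar (n : ℕ) where
  | z0 : ZVar n
  | pr : Fin n → ZVar n

/-- Sentential forms over the variables for finite derivations and terminals. -/
abbrev SForm (n : ℕ) (A : Type) := List (XVar n ⊕ A)

/-- The productions `P_X` for finite derivations of the grammar `G_k`
constructed from a roc automaton with matrix blocks `M`, initial vector `Iv`
and final vector `Pv` (here `a, b` range over `Σ ∪ {ε}`, represented by words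
of length at most one). -/
inductive XProd {K : Type} (R : CSOps K) {n : ℕ} {A : Type} (M : IMat n (List A → K))
    (Iv Pv : Fin n → List A → K) : XVar n → SForm n A → Prop where
  | start (a b : List A) (m₁ m₂ : Fin n) : a.length ≤ 1 → b.length ≤ 1 →
      R.mul (Iv m₁ a) (Pv m₂ b) ≠ R.zero →
      XProd R M Iv Pv XVar.x0 (a.map Sum.inr ++ Sum.inl (XVar.tr m₁ m₂) :: b.map Sum.inr)
  | push (a : List A) (i j m₁ m₂ : Fin n) : a.length ≤ 1 → M 1 2 i m₁ a ≠ R.zero →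
      XProd R M Iv Pv (XVar.tr i j)
        (a.map Sum.inr ++ [Sum.inl (XVar.tr m₁ m₂), Sum.inl (XVar.tr m₂ j)])
  | stay (a : List A) (i j m : Fin n) : a.length ≤ 1 → M 1 1 i m a ≠ R.zero →
      XProd R M Iv Pv (XVar.tr i j) (a.map Sum.inr ++ [Sum.inl (XVar.tr m j)])
  | pop (a : List A) (i j : Fin n) : a.length ≤ 1 → M 1 0 i j a ≠ R.zero →
      XProd R M Iv Pv (XVar.tr i j) (a.map Sum.inr)

/-- The productions `P_Z` for infinite derivations: `ZProd R M Iv W α m` states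
that `W → α [m, p]` is a production, where `α` is the part of the right-hand
side over `X ∪ Σ` and `[m, p]` is the trailing variable for infinite derivations. -/
inductive ZProd {K : Type} (R : CSOps K) {n : ℕ} {A : Type} (M : IMat n (List A → K))
    (Iv : Fin n → List A → K) : ZVar n → SForm n A → Fin n → Prop where
  | init (a : List A) (m : Fin n) : a.length ≤ 1 → Iv m a ≠ R.zero →
      ZProd R M Iv ZVar.z0 (a.map Sum.inr) m
  | push (a : List A) (i m : Fin n) : a.length ≤ 1 → M 1 2 i m a ≠ R.zero →
      ZProd R M Iv (ZVar.pr i) (a.map Sum.inr) m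
  | pushTr (a : List A) (i m₁ m₂ : Fin n) : a.length ≤ 1 → M 1 2 i m₁ a ≠ R.zero →
      ZProd R M Iv (ZVar.pr i) (a.map Sum.inr ++ [Sum.inl (XVar.tr m₁ m₂)]) m₂
  | stay (a : List A) (i m : Fin n) : a.length ≤ 1 → M 1 1 i m a ≠ R.zero →
      ZProd R M Iv (ZVar.pr i) (a.map Sum.inr) m

/-- One leftmost derivation step: the leftmost variable is rewritten. -/
inductive LMStep {n : ℕ} {A : Type} (Px : XVar n → SForm n A → Prop) :
    SForm n A → SForm n A → Prop where
  | mk (u : List A) (X : XVar n) (β rest : SForm n A) : Px X β →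
      LMStep Px (u.map Sum.inr ++ Sum.inl X :: rest) (u.map Sum.inr ++ (β ++ rest))

/-- The finite-word part of the language of the grammar:
`{w ∈ Σ* | x₀ ⇒_L^* w}`. -/
def FinLang {K : Type} (R : CSOps K) {n : ℕ} {A : Type} (M : IMat n (List A → K))
    (Iv Pv : Fin n → List A → K) : Set (List A) :=
  {w | Relation.ReflTransGen (LMStep (XProd R M Iv Pv)) [Sum.inl XVar.x0] (w.map Sum.inr)}

/-- The set of finite leftmost derivations of the word `w` from `x₀`: lists of
sentential forms beginning with `x₀`, ending with `w`, each step being a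
leftmost rewriting by a production of `P_X`. -/
def finDerivSet {K : Type} (R : CSOps K) {n : ℕ} {A : Type} (M : IMat n (List A → K))
    (Iv Pv : Fin n → List A → K) (w : List A) : Set (List (SForm n A)) :=
  {l | l.Chain' (LMStep (XProd R M Iv Pv)) ∧ l.head? = some [Sum.inl XVar.x0] ∧
       l.getLast? = some (w.map Sum.inr)}

/-- The leftmost variable of a sentential form (the one rewritten in a leftmost
derivation step). -/
def leftVar {n : ℕ} {A : Type} (α : SForm n A) : Option (XVar n) :=
  (α.filterMap Sum.getLeft?).head?

/-- An infinite (leftmost) derivation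
`z₀ ⇒_L α₀[i₀,p] ⇒_L^* w₀[i₀,p] ⇒_L w₀α₁[i₁,p] ⇒_L^* w₀w₁[i₁,p] ⇒_L ⋯`:
the data of the states `i₀, i₁, …`, the sentential forms `α₀, α₁, …`, the
produced finite words `w₀, w₁, …` and the finite leftmost derivations
`α_m ⇒_L^* w_m`. -/
structure InfDeriv {K : Type} (R : CSOps K) {n : ℕ} {A : Type} (M : IMat n (List A → K))
    (Iv Pv : Fin n → List A → K) where
  iseq : ℕ → Fin n
  alph : ℕ → SForm n A
  wseq : ℕ → List A
  fder : ℕ → List (SForm n A)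
  hz0 : ZProd R M Iv ZVar.z0 (alph 0) (iseq 0)
  hz : ∀ m, ZProd R M Iv (ZVar.pr (iseq m)) (alph (m + 1)) (iseq (m + 1))
  hchain : ∀ m, (fder m).Chain' (LMStep (XProd R M Iv Pv))
  hhead : ∀ m, (fder m).head? = some (alph m)
  hlast : ∀ m, (fder m).getLast? = some ((wseq m).map Sum.inr)

/-- The infinite derivation produces the ω-word `w = w₀ w₁ w₂ ⋯`. -/
def InfDeriv.Produces {K : Type} {R : CSOps K} {n : ℕ} {A : Type}
    {M : IMat n (List A → K)} {Iv Pv : Fin n → List A → K}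
    (d : InfDeriv R M Iv Pv) (w : ℕ → A) : Prop :=
  IsFact d.wseq w

/-- The Büchi condition of an `(ω,k)`-derivation: the sequence of first
components of the variables rewritten (`i₀, i₁^1, …, i₁^{t₁}, i₁, i₂^1, …`)
lies in `P_k`, i.e. hits `{1, …, k}` (represented by `Fin`-values `< k`)
infinitely often. -/
def InfDeriv.Buchi {K : Type} {R : CSOps K} {n : ℕ} {A : Type}
    {M : IMat n (List A → K)} {Iv Pv : Fin n → List A → K}
    (d : InfDeriv R M Iv Pv) (k : ℕ) : Prop :=
  ∀ N : ℕ, ∃ m, N ≤ m ∧ ((d.iseq m : ℕ) < k ∨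
    ∃ α ∈ (d.fder m).dropLast, ∃ i j : Fin n,
      leftVar α = some (XVar.tr i j) ∧ (i : ℕ) < k)

/-- The infinite-word part of the language of the grammar `G_k`:
`{w ∈ Σ^ω | z₀ ⇒_L^{ω,k} w}`. -/
def InfLang {K : Type} (R : CSOps K) {n : ℕ} {A : Type} (M : IMat n (List A → K))
    (Iv Pv : Fin n → List A → K) (k : ℕ) : Set (ℕ → A) :=
  {w | ∃ d : InfDeriv R M Iv Pv, d.Produces w ∧ d.Buchi k}

/-! ### Computations of an ω-restricted one-counter automaton -/

/-- One computation step between instantaneous descriptions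
`(state, remaining input, counter)`. -/
def CompStep {K : Type} (R : CSOps K) {n : ℕ} {A : Type} (M : IMat n (List A → K)) :
    (Fin n × List A × ℕ) → (Fin n × List A × ℕ) → Prop := fun c c' =>
  ∃ a : List A, a.length ≤ 1 ∧ c.2.1 = a ++ c'.2.1 ∧ 1 ≤ c.2.2 ∧
    ((c'.2.2 = c.2.2 + 1 ∧ M 1 2 c.1 c'.1 a ≠ R.zero) ∨
     (c'.2.2 = c.2.2 ∧ M 1 1 c.1 c'.1 a ≠ R.zero) ∨
     (c'.2.2 + 1 = c.2.2 ∧ M 1 0 c.1 c'.1 a ≠ R.zero))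

/-- The set of finite computations on input `w`: from an initial instantaneous
description `(i, w, p)` with `I_i ≠ 0` to an accepting instantaneous
description `(j, ε, ε)` with `P_j ≠ 0`. -/
def finCompSet {K : Type} (R : CSOps K) {n : ℕ} {A : Type} (M : IMat n (List A → K))
    (Iv Pv : Fin n → List A → K) (w : List A) : Set (List (Fin n × List A × ℕ)) :=
  {l | l.Chain' (CompStep R M) ∧
       (∃ i : Fin n, Iv i ≠ (fun _ => R.zero) ∧ l.head? = some (i, w, 1)) ∧
       (∃ j : Fin n, Pv j ≠ (fun _ => R.zero) ∧ l.getLast? = some (j, [], 0))}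

/-- An infinite computation of the automaton starting in an initial
instantaneous description `(i, ·, p)` with `I_i ≠ 0`: the sequences of states,
counter values and read letters (`rd m ∈ Σ ∪ {ε}`). -/
structure InfComp {K : Type} (R : CSOps K) {n : ℕ} {A : Type} (M : IMat n (List A → K))
    (Iv : Fin n → List A → K) where
  st : ℕ → Fin n
  ct : ℕ → ℕ
  rd : ℕ → List A
  hI : Iv (st 0) ≠ fun _ => R.zero
  hct0 : ct 0 = 1
  hlen : ∀ m, (rd m).length ≤ 1
  hpos : ∀ m, 1 ≤ ct m
  hstep : ∀ m,
    (ct (m + 1) = ct m + 1 ∧ M 1 2 (st m) (st (m + 1)) (rd m) ≠ R.zero) ∨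
    (ct (m + 1) = ct m ∧ M 1 1 (st m) (st (m + 1)) (rd m) ≠ R.zero) ∨
    (ct (m + 1) + 1 = ct m ∧ M 1 0 (st m) (st (m + 1)) (rd m) ≠ R.zero)

/-- The infinite computation reads exactly the ω-word `w`. -/
def InfComp.Reads {K : Type} {R : CSOps K} {n : ℕ} {A : Type}
    {M : IMat n (List A → K)} {Iv : Fin n → List A → K}
    (d : InfComp R M Iv) (w : ℕ → A) : Prop :=
  IsFact d.rd w

/-- The infinite computation visits the repeated states `{1, …, k}` infinitely
often. -/
def InfComp.Buchi {K : Type} {R : CSOps K} {n : ℕ} {A : Type}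
    {M : IMat n (List A → K)} {Iv : Fin n → List A → K}
    (d : InfComp R M Iv) (k : ℕ) : Prop :=
  ∀ N : ℕ, ∃ m, N ≤ m ∧ (d.st m : ℕ) < k

/-! ### The complete star-omega semirings `𝔹` and `ℕ^∞` -/

open Classical in
/-- The complete semiring `𝔹 = ({0,1}, ∨, ∧, *, 0, 1)`. -/
noncomputable def boolCS : CSOps Bool where
  add a b := a || b
  mul a b := a && b
  zero := false
  one := true
  iSum f := decide (∃ i, f i = true)

open Classical in
/-- The complete semiring-semimodule pair `(𝔹, 𝔹)`, with the infinite product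
making `𝔹` a complete star-omega semiring. -/
noncomputable def boolCP : CPOps Bool Bool where
  vadd a b := a || b
  vzero := false
  smul a b := a && b
  vSum f := decide (∃ i, f i = true)
  iProd s := decide (∀ i, s i = true)

/-- The complete semiring `ℕ^∞ = (ℕ ∪ {∞}, +, ·, *, 0, 1)`: infinite sums are
the suprema of the finite partial sums. -/
noncomputable def enatCS : CSOps ℕ∞ where
  add a b := a + b
  mul a b := a * b
  zero := 0
  one := 1
  iSum {ι} f := ⨆ F : Finset ι, ∑ i ∈ F, f i

open Classical in
/-- The complete semiring-semimodule pair `(ℕ^∞, ℕ^∞)`, with the infinite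
product making `ℕ^∞` a complete star-omega semiring. -/
noncomputable def enatCP : CPOps ℕ∞ ℕ∞ where
  vadd a b := a + b
  vzero := 0
  smul a b := a * b
  vSum {ι} f := ⨆ F : Finset ι, ∑ i ∈ F, f i
  iProd s := if ∃ i, s i = 0 then 0 else ⨆ m : ℕ, ∏ i ∈ Finset.range m, s i


/-! ### Auxiliary material for Statement 5 -/

namespace Stmt5Aux

variable {S V : Type} {R : CSOps S} {P : CPOps S V}

lemma isum_congr {ι : Type} {f g : ι → S} (h : ∀ i, f i = g i) :
    R.iSum f = R.iSum g := congrArg _ (funext h)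

lemma vsum_congr {ι : Type} {f g : ι → V} (h : ∀ i, f i = g i) :
    P.vSum f = P.vSum g := congrArg _ (funext h)

lemma isum_equiv (hR : R.IsComplete) {ι κ : Type} (e : ι ≃ κ) (f : ι → S) :
    R.iSum (fun x : κ => f (e.symm x)) = R.iSum f := by
  conv_rhs => rw [← hR.iSum_partition (fun i => e i) f]
  refine isum_congr (fun x => ?_)
  exact (hR.iSum_single (fun i : {i : ι // e i = x} => f i.1)
    ⟨e.symm x, e.apply_symm_apply x⟩
    (fun i => Subtype.ext (e.eq_symm_apply.mpr i.2))).symm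

lemma vsum_equiv (hP : P.IsComplete R) {ι κ : Type} (e : ι ≃ κ) (f : ι → V) :
    P.vSum (fun x : κ => f (e.symm x)) = P.vSum f := by
  conv_rhs => rw [← hP.vSum_partition (fun i => e i) f]
  refine vsum_congr (fun x => ?_)
  exact (hP.vSum_single (fun i : {i : ι // e i = x} => f i.1)
    ⟨e.symm x, e.apply_symm_apply x⟩
    (fun i => Subtype.ext (e.eq_symm_apply.mpr i.2))).symm

/-- Reindexing a subtype along an equivalence of the defining predicates. -/
def subEquiv {ι : Type} {p q : ι → Prop} (h : ∀ i, p i ↔ q i) :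
    {i // p i} ≃ {i // q i} where
  toFun x := ⟨x.1, (h x.1).mp x.2⟩
  invFun x := ⟨x.1, (h x.1).mpr x.2⟩
  left_inv _ := rfl
  right_inv _ := rfl

def fiberEquiv {ι κ : Type} (i : ι) : κ ≃ {p : ι × κ // p.1 = i} where
  toFun j := ⟨(i, j), rfl⟩
  invFun p := p.1.2
  left_inv _ := rfl
  right_inv p := by obtain ⟨⟨i', j'⟩, h⟩ := p; dsimp only at h; subst h; rfl

def sigmaFiberEquiv' {ι : Type} {κ : ι → Type} (i : ι) :
    κ i ≃ {p : (Σ i, κ i) // p.1 = i} where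
  toFun x := ⟨⟨i, x⟩, rfl⟩
  invFun p := p.2 ▸ p.1.2
  left_inv _ := rfl
  right_inv p := by obtain ⟨⟨i', x⟩, h⟩ := p; dsimp only at h; subst h; rfl

lemma isum_prod (hR : R.IsComplete) {ι κ : Type} (f : ι × κ → S) :
    R.iSum (fun i : ι => R.iSum (fun x : κ => f (i, x))) = R.iSum f := by
  conv_rhs => rw [← hR.iSum_partition Prod.fst f]
  refine isum_congr (fun i => ?_)
  refine Eq.trans (isum_equiv hR (fiberEquiv (κ := κ) i) (fun x : κ => f (i, x))).symm ?_
  refine isum_congr (fun p => congrArg f ?_)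
  obtain ⟨⟨i', x⟩, h⟩ := p
  dsimp only at h ⊢
  subst h
  rfl

lemma vsum_prod (hP : P.IsComplete R) {ι κ : Type} (f : ι × κ → V) :
    P.vSum (fun i : ι => P.vSum (fun x : κ => f (i, x))) = P.vSum f := by
  conv_rhs => rw [← hP.vSum_partition Prod.fst f]
  refine vsum_congr (fun i => ?_)
  refine Eq.trans (vsum_equiv hP (fiberEquiv (κ := κ) i) (fun x : κ => f (i, x))).symm ?_
  refine vsum_congr (fun p => congrArg f ?_)
  obtain ⟨⟨i', x⟩, h⟩ := p
  dsimp only at h ⊢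
  subst h
  rfl

lemma vsum_sigma (hP : P.IsComplete R) {ι : Type} {κ : ι → Type} (f : (Σ i, κ i) → V) :
    P.vSum (fun i : ι => P.vSum (fun x : κ i => f ⟨i, x⟩)) = P.vSum f := by
  conv_rhs => rw [← hP.vSum_partition Sigma.fst f]
  refine vsum_congr (fun i => ?_)
  refine Eq.trans (vsum_equiv hP (sigmaFiberEquiv' (κ := κ) i) (fun x : κ i => f ⟨i, x⟩)).symm ?_
  refine vsum_congr (fun p => ?_)
  obtain ⟨⟨i', x⟩, h⟩ := p
  dsimp only at h ⊢
  subst h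
  rfl

lemma vsum_zero (hP : P.IsComplete R) {ι : Type} (f : ι → V) (h : ∀ i, f i = P.vzero) :
    P.vSum f = P.vzero := by
  have h1 : P.vSum f = P.vSum (fun _ : ι => P.smul R.zero P.vzero) :=
    vsum_congr (fun i => by rw [h i, hP.zero_smul])
  rw [h1, ← hP.iSum_smul (fun _ : ι => R.zero) P.vzero, hP.smul_vzero]

lemma vsum_split (hP : P.IsComplete R) {ι : Type} (p : ι → Prop) (f : ι → V) :
    P.vSum f = P.vadd (P.vSum fun x : {i // ¬ p i} => f x.1)
      (P.vSum fun x : {i // p i} => f x.1) := by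
  classical
  have h1 := hP.vSum_partition (fun i => decide (p i)) f
  have h2 := hP.vSum_pair
    (fun b : Bool => P.vSum (fun i : {i : ι // decide (p i) = b} => f i.1))
    false true (by simp) (fun b => by cases b <;> simp)
  rw [← h1, h2]
  refine congrArg₂ P.vadd ?_ ?_
  · exact vsum_equiv hP
      (subEquiv (fun i => ⟨fun h => decide_eq_false h, fun h => of_decide_eq_false h⟩ :
        ∀ i, ¬ p i ↔ decide (p i) = false))
      (fun x : {i // ¬ p i} => f x.1)
  · exact vsum_equiv hP
      (subEquiv (fun i => ⟨fun h => decide_eq_true h, fun h => of_decide_eq_true h⟩ :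
        ∀ i, p i ↔ decide (p i) = true))
      (fun x : {i // p i} => f x.1)

lemma vsum_drop (hP : P.IsComplete R) {ι : Type} (p : ι → Prop) (f : ι → V)
    (h0 : ∀ i, ¬ p i → f i = P.vzero) :
    P.vSum f = P.vSum (fun x : {i // p i} => f x.1) := by
  rw [vsum_split hP p f,
    vsum_zero hP (fun x : {i // ¬ p i} => f x.1) (fun x => h0 x.1 x.2), hP.vzero_vadd]

/-! ### roc matrices -/

lemma M_row0 {n : ℕ} {M : IMat n S} (hM : IsRoc R M) (j : ℕ) : M 0 j = bZero R :=
  hM.2 0 j (Or.inl rfl)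

lemma Mshift {n : ℕ} {M : IMat n S} (hM : IsRoc R M) {i j : ℕ}
    (hi : 2 ≤ i) (hj : 1 ≤ j) : M i j = M (i - 1) (j - 1) := by
  obtain ⟨i', rfl⟩ : ∃ i', i = i' + 2 := ⟨i - 2, by omega⟩
  have h1 := hM.1 (i' + 2) (by omega)
  have h2 := hM.1 (i' + 1) (by omega)
  by_cases hA : j = i' + 3
  · subst hA
    show M (i' + 2) (i' + 3) = M (i' + 1) (i' + 2)
    rw [h1.1]
    exact (h2.1).symm
  by_cases hB : j = i' + 2
  · subst hB
    show M (i' + 2) (i' + 2) = M (i' + 1) (i' + 1)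
    rw [h1.2.1]
    exact (h2.2.1).symm
  by_cases hC : j = i' + 1
  · subst hC
    show M (i' + 2) (i' + 1) = M (i' + 1) i'
    rw [show M (i' + 2) (i' + 1) = M 1 0 from h1.2.2]
    exact (show M (i' + 1) i' = M 1 0 from h2.2.2).symm
  · show M (i' + 2) j = M (i' + 1) (j - 1)
    rw [hM.2 (i' + 2) j (Or.inr ⟨by omega, by omega, by omega⟩),
        hM.2 (i' + 1) (j - 1) (Or.inr ⟨by omega, by omega, by omega⟩)]

/-! ### Path weights for matrix powers -/

def pw (R : CSOps S) {n : ℕ} (M : IMat n S) :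
    (m : ℕ) → ℕ → Fin n → ℕ → Fin n → (Fin m → ℕ × Fin n) → S
  | 0, i, a, j, b, _ => if i = j ∧ a = b then R.one else R.zero
  | m + 1, i, a, j, b, q =>
      R.mul (M i (q 0).1 a (q 0).2) (pw R M m (q 0).1 (q 0).2 j b (fun t => q t.succ))

def consEquiv (X : Type) (m : ℕ) : (X × (Fin m → X)) ≃ (Fin (m + 1) → X) where
  toFun p := Fin.cons p.1 p.2
  invFun q := (q 0, fun t => q t.succ)
  left_inv p := by
    refine congrArg₂ Prod.mk ?_ ?_
    · exact Fin.cons_zero _ _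
    · funext t; exact Fin.cons_succ _ _ _
  right_inv q := by
    funext t
    refine Fin.cases ?_ ?_ t
    · exact Fin.cons_zero _ _
    · intro t'; exact Fin.cons_succ _ _ _

lemma pow_pw (hR : R.IsComplete) {n : ℕ} {M : IMat n S} :
    ∀ (m : ℕ) (i j : ℕ) (a b : Fin n),
      iMatPow R M m i j a b = R.iSum (pw R M m i a j b) := by
  intro m
  induction m with
  | zero =>
    intro i j a b
    rw [hR.iSum_single (pw R M 0 i a j b) (fun t : Fin 0 => t.elim0)
      (fun f => funext fun t => t.elim0)]
    show (if i = j then bOne R else bZero R) a b = if i = j ∧ a = b then R.one else R.zero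
    by_cases hij : i = j <;> by_cases hab : a = b <;> simp [bOne, bZero, hij, hab]
  | succ m ih =>
    intro i j a b
    calc R.iSum (fun l : ℕ => bMul R (M i l) (iMatPow R M m l j) a b)
        = R.iSum (fun l : ℕ => R.iSum (fun c : Fin n => R.iSum (fun q : Fin m → ℕ × Fin n =>
            R.mul (M i l a c) (pw R M m l c j b q)))) := by
          refine isum_congr (fun l => ?_)
          show R.iSum (fun c : Fin n => R.mul (M i l a c) (iMatPow R M m l j c b)) = _
          refine isum_congr (fun c => ?_)
          rw [ih l j c b, hR.mul_iSum]
      _ = R.iSum (fun p : ℕ × Fin n => R.iSum (fun q : Fin m → ℕ × Fin n =>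
            R.mul (M i p.1 a p.2) (pw R M m p.1 p.2 j b q))) :=
          isum_prod hR (fun p : ℕ × Fin n => R.iSum (fun q : Fin m → ℕ × Fin n =>
            R.mul (M i p.1 a p.2) (pw R M m p.1 p.2 j b q)))
      _ = R.iSum (fun pq : (ℕ × Fin n) × (Fin m → ℕ × Fin n) =>
            R.mul (M i pq.1.1 a pq.1.2) (pw R M m pq.1.1 pq.1.2 j b pq.2)) :=
          isum_prod hR (fun pq : (ℕ × Fin n) × (Fin m → ℕ × Fin n) =>
            R.mul (M i pq.1.1 a pq.1.2) (pw R M m pq.1.1 pq.1.2 j b pq.2))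
      _ = R.iSum (pw R M (m + 1) i a j b) := by
          rw [← isum_equiv hR (consEquiv (ℕ × Fin n) m)
            (fun pq : (ℕ × Fin n) × (Fin m → ℕ × Fin n) =>
              R.mul (M i pq.1.1 a pq.1.2) (pw R M m pq.1.1 pq.1.2 j b pq.2))]
          exact isum_congr (fun q => rfl)

lemma pw_head_zero (hR : R.IsComplete) {n : ℕ} {M : IMat n S} (hM : IsRoc R M)
    (m : ℕ) (hm : 1 ≤ m) (a : Fin n) (j : ℕ) (b : Fin n) (q : Fin m → ℕ × Fin n) :
    pw R M m 0 a j b q = R.zero := by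
  obtain ⟨m', rfl⟩ : ∃ m', m = m' + 1 := ⟨m - 1, by omega⟩
  show R.mul (M 0 (q 0).1 a (q 0).2) _ = R.zero
  rw [M_row0 hM]
  show R.mul R.zero _ = R.zero
  exact hR.zero_mul _

lemma pw_last_zero (hR : R.IsComplete) {n : ℕ} {M : IMat n S} (j' : ℕ) (b : Fin n) :
    ∀ (m : ℕ) (q : Fin m → ℕ × Fin n) (i : ℕ) (a : Fin n) (t : Fin m),
      (t : ℕ) + 1 = m → q t ≠ (j', b) → pw R M m i a j' b q = R.zero := by
  intro m
  induction m with
  | zero => intro q i a t; exact t.elim0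
  | succ m ih =>
    intro q i a t ht hq
    rcases Fin.eq_zero_or_eq_succ t with rfl | ⟨t', rfl⟩
    · have hm : m = 0 := by simp at ht; omega
      subst hm
      have hcne : ¬((q 0).1 = j' ∧ (q 0).2 = b) := fun hc => hq (by rw [← hc.1, ← hc.2])
      show R.mul (M i (q 0).1 a (q 0).2)
        (if (q 0).1 = j' ∧ (q 0).2 = b then R.one else R.zero) = R.zero
      rw [if_neg hcne]
      exact hR.mul_zero _
    · have ht' : (t' : ℕ) + 1 = m := by simpa [Fin.val_succ] using ht
      show R.mul (M i (q 0).1 a (q 0).2)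
        (pw R M m (q 0).1 (q 0).2 j' b (fun s => q s.succ)) = R.zero
      rw [ih (fun s => q s.succ) (q 0).1 (q 0).2 t' ht' hq]
      exact hR.mul_zero _

lemma pw_mid_zero (hR : R.IsComplete) {n : ℕ} {M : IMat n S} (hM : IsRoc R M)
    (j' : ℕ) (b : Fin n) :
    ∀ (m : ℕ) (q : Fin m → ℕ × Fin n) (i : ℕ) (a : Fin n) (t : Fin m),
      (t : ℕ) + 1 < m → (q t).1 = 0 → pw R M m i a j' b q = R.zero := by
  intro m
  induction m with
  | zero => intro q i a t; exact t.elim0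
  | succ m ih =>
    intro q i a t ht hq
    rcases Fin.eq_zero_or_eq_succ t with rfl | ⟨t', rfl⟩
    · have hm : 1 ≤ m := by simp at ht; omega
      show R.mul (M i (q 0).1 a (q 0).2)
        (pw R M m (q 0).1 (q 0).2 j' b (fun s => q s.succ)) = R.zero
      rw [hq, pw_head_zero hR hM m hm (q 0).2 j' b (fun s => q s.succ)]
      exact hR.mul_zero _
    · have ht' : (t' : ℕ) + 1 < m := by simpa [Fin.val_succ] using ht
      show R.mul (M i (q 0).1 a (q 0).2)
        (pw R M m (q 0).1 (q 0).2 j' b (fun s => q s.succ)) = R.zero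
      rw [ih (fun s => q s.succ) (q 0).1 (q 0).2 t' ht' hq]
      exact hR.mul_zero _

/-! ### Finite prefixes of infinite products -/

def prodF (R : CSOps S) : ℕ → (ℕ → S) → S
  | 0, _ => R.one
  | m + 1, s => R.mul (s 0) (prodF R m (fun t => s (t + 1)))

lemma prefix_iProd (hP : P.IsComplete R) :
    ∀ (m : ℕ) (s : ℕ → S),
      P.smul (prodF R m s) (P.iProd (fun t => s (t + m))) = P.iProd s := by
  intro m
  induction m with
  | zero =>
    intro s
    show P.smul R.one (P.iProd (fun t => s (t + 0))) = P.iProd s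
    rw [hP.one_smul]
    rfl
  | succ m ih =>
    intro s
    show P.smul (R.mul (s 0) (prodF R m (fun t => s (t + 1))))
      (P.iProd (fun t => s (t + (m + 1)))) = P.iProd s
    rw [hP.mul_smul]
    have h3 : P.smul (prodF R m (fun t => s (t + 1))) (P.iProd (fun t => s (t + (m + 1))))
        = P.iProd (fun t => s (t + 1)) := ih (fun t => s (t + 1))
    rw [h3]
    exact hP.smul_iProd_shift s

lemma pathEntry_shift {n : ℕ} {M : IMat n S} (i : ℕ) (a : Fin n)
    (hs : ℕ → ℕ) (js : ℕ → Fin n) :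
    (fun t => pathEntry M i a hs js (t + 1))
      = pathEntry M (hs 0) (js 0) (fun t => hs (t + 1)) (fun t => js (t + 1)) := by
  funext t
  cases t with
  | zero => rfl
  | succ t => rfl

lemma pathEntry_tail {n : ℕ} {M : IMat n S} (i : ℕ) (a : Fin n)
    (hs : ℕ → ℕ) (js : ℕ → Fin n) (d : ℕ) (hd : hs d = 1) :
    (fun t => pathEntry M i a hs js (t + (d + 1)))
      = pathEntry M 1 (js d) (fun t => hs (t + (d + 1))) (fun t => js (t + (d + 1))) := by
  funext t
  cases t with
  | zero =>
    show M (hs (0 + d)) (hs (0 + d + 1)) (js (0 + d)) (js (0 + d + 1))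
      = M 1 (hs (0 + (d + 1))) (js d) (js (0 + (d + 1)))
    simp only [Nat.zero_add]
    rw [hd]
  | succ t =>
    show M (hs (t + 1 + d)) (hs (t + 1 + d + 1)) (js (t + 1 + d)) (js (t + 1 + d + 1))
      = M (hs (t + (d + 1))) (hs (t + 1 + (d + 1))) (js (t + (d + 1))) (js (t + 1 + (d + 1)))
    rw [show t + 1 + d = t + (d + 1) from by omega,
        show t + (d + 1) + 1 = t + 1 + (d + 1) from by omega]

lemma prodpw (hR : R.IsComplete) {n : ℕ} {M : IMat n S} (hM : IsRoc R M) :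
    ∀ (m : ℕ) (i : ℕ) (a : Fin n) (hs : ℕ → ℕ) (js : ℕ → Fin n),
      2 ≤ i → (∀ t, t < m → 2 ≤ hs t) → hs m = 1 →
      prodF R (m + 1) (pathEntry M i a hs js)
        = pw R M (m + 1) (i - 1) a 0 (js m)
            (fun t : Fin (m + 1) => (hs (t : ℕ) - 1, js (t : ℕ))) := by
  intro m
  induction m with
  | zero =>
    intro i a hs js hi _ h1
    show R.mul (M i (hs 0) a (js 0)) R.one
        = R.mul (M (i - 1) (hs 0 - 1) a (js 0))
            (if hs 0 - 1 = 0 ∧ js 0 = js 0 then R.one else R.zero)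
    rw [Mshift hM hi (by omega), if_pos (⟨by omega, rfl⟩ : hs 0 - 1 = 0 ∧ js 0 = js 0)]
  | succ m ih =>
    intro i a hs js hi hmid h1
    have hs0 : 2 ≤ hs 0 := hmid 0 (by omega)
    have step : prodF R (m + 1 + 1) (pathEntry M i a hs js)
        = R.mul (M i (hs 0) a (js 0))
            (prodF R (m + 1)
              (pathEntry M (hs 0) (js 0) (fun t => hs (t + 1)) (fun t => js (t + 1)))) := by
      show R.mul (pathEntry M i a hs js 0)
        (prodF R (m + 1) (fun t => pathEntry M i a hs js (t + 1))) = _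
      rw [pathEntry_shift]
      rfl
    rw [step, ih (hs 0) (js 0) (fun t => hs (t + 1)) (fun t => js (t + 1)) hs0
      (fun t htm => hmid (t + 1) (by omega)) h1]
    rw [Mshift hM hi (by omega)]
    show R.mul (M (i - 1) (hs 0 - 1) a (js 0))
        (pw R M (m + 1) (hs 0 - 1) (js 0) 0 (js (m + 1))
          (fun t : Fin (m + 1) => (hs ((t : ℕ) + 1) - 1, js ((t : ℕ) + 1))))
      = R.mul (M (i - 1) (hs (((0 : Fin (m + 2)) : ℕ)) - 1) a (js ((0 : Fin (m + 2)) : ℕ)))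
          (pw R M (m + 1) (hs ((0 : Fin (m + 2)) : ℕ) - 1) (js ((0 : Fin (m + 2)) : ℕ)) 0
            (js (m + 1))
            (fun t : Fin (m + 1) => (hs ((t.succ : Fin (m + 2)) : ℕ) - 1,
              js ((t.succ : Fin (m + 2)) : ℕ))))
    simp only [Fin.val_zero, Fin.val_succ]

/-! ### Büchi condition shifts -/

lemma inpk_shift_of {n k : ℕ} (js : ℕ → Fin n) (d : ℕ) (h : InPk n k js) :
    InPk n k (fun t => js (t + d)) := by
  intro N
  obtain ⟨t, ht, hk⟩ := h (N + d)
  refine ⟨t - d, by omega, ?_⟩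
  show ((js (t - d + d) : Fin n) : ℕ) < k
  rw [Nat.sub_add_cancel (by omega : d ≤ t)]
  exact hk

/-! ### The index types of the two sides -/

def QTt (n k : ℕ) : Type :=
  {q : (ℕ → ℕ) × (ℕ → Fin n) // (∀ t, 1 ≤ q.1 t) ∧ InPk n k q.2}

def TB (n k : ℕ) : Type :=
  Σ _l : Fin n, Σ m : ℕ, ((Fin m → ℕ × Fin n) × QTt n k)

def GoodT {n k : ℕ} : TB n k → Prop :=
  fun x => 1 ≤ x.2.1 ∧ ∀ t : Fin x.2.1,
    (((t : ℕ) + 1 = x.2.1 → x.2.2.1 t = (0, x.1)) ∧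
     ((t : ℕ) + 1 < x.2.1 → 1 ≤ (x.2.2.1 t).1))

def Wt (R : CSOps S) (P : CPOps S V) {n : ℕ} (M : IMat n S) (k : ℕ) (j : Fin n) :
    TB n k → V :=
  fun x => P.smul (pw R M x.2.1 1 j 0 x.1 x.2.2.1)
    (P.iProd (pathEntry M 1 x.1 x.2.2.2.1.1 x.2.2.2.1.2))

lemma TB_ext {n k : ℕ} {l l' : Fin n} {m m' : ℕ} {q : Fin m → ℕ × Fin n}
    {q' : Fin m' → ℕ × Fin n} {tq tq' : QTt n k}
    (hl : l = l') (hm : m = m')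
    (hq : ∀ (t : ℕ) (h : t < m) (h' : t < m'), q ⟨t, h⟩ = q' ⟨t, h'⟩)
    (htq : tq = tq') :
    (⟨l, m, q, tq⟩ : TB n k) = ⟨l', m', q', tq'⟩ := by
  subst hl; subst hm; subst htq
  have hq' : q = q' := funext fun t => hq t.1 t.isLt t.isLt
  rw [hq']

/-! ### The equivalence for the "never reaches p" part -/

def eAe (n k : ℕ) : QTt n k ≃ {q : QTt n k // ¬ ∃ t, q.1.1 t = 1} where
  toFun q :=
    ⟨⟨(fun t => q.1.1 t + 1, q.1.2), fun t => by show 1 ≤ q.1.1 t + 1; omega, q.2.2⟩,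
      fun hex => by
        obtain ⟨t, ht⟩ := hex
        have ht' : q.1.1 t + 1 = 1 := ht
        have h1 : 1 ≤ q.1.1 t := q.2.1 t
        omega⟩
  invFun x :=
    ⟨(fun t => x.1.1.1 t - 1, x.1.1.2),
      fun t => by
        show 1 ≤ x.1.1.1 t - 1
        have h1 := x.1.2.1 t
        have h2 : x.1.1.1 t ≠ 1 := fun h => x.2 ⟨t, h⟩
        omega,
      x.1.2.2⟩
  left_inv q := Subtype.ext (congrArg₂ Prod.mk (funext fun t => by
    show q.1.1 t + 1 - 1 = q.1.1 t
    omega) rfl)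
  right_inv x := Subtype.ext (Subtype.ext (congrArg₂ Prod.mk (funext fun t => by
    show x.1.1.1 t - 1 + 1 = x.1.1.1 t
    have := x.1.2.1 t
    omega) rfl))

/-! ### The equivalence for the "reaches p" part -/

def mkHS {n : ℕ} (m : ℕ) (q : Fin m → ℕ × Fin n) (c : ℕ → ℕ) : ℕ → ℕ :=
  fun t => if h : t < m then (q ⟨t, h⟩).1 + 1 else c (t - m)

def mkJS {n : ℕ} (m : ℕ) (q : Fin m → ℕ × Fin n) (c : ℕ → Fin n) : ℕ → Fin n :=
  fun t => if h : t < m then (q ⟨t, h⟩).2 else c (t - m)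

def eBto {n k : ℕ} (x : {x : TB n k // GoodT x}) : {q : QTt n k // ∃ t, q.1.1 t = 1} :=
  ⟨⟨(mkHS x.1.2.1 x.1.2.2.1 x.1.2.2.2.1.1, mkJS x.1.2.1 x.1.2.2.1 x.1.2.2.2.1.2),
    by
      intro t
      show 1 ≤ mkHS x.1.2.1 x.1.2.2.1 x.1.2.2.2.1.1 t
      unfold mkHS
      split
      · omega
      · exact x.1.2.2.2.2.1 _,
    by
      intro N
      obtain ⟨t, ht, hk⟩ := x.1.2.2.2.2.2 N
      refine ⟨t + x.1.2.1, le_trans ht (Nat.le_add_right t _), ?_⟩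
      show ((mkJS x.1.2.1 x.1.2.2.1 x.1.2.2.2.1.2 (t + x.1.2.1) : Fin n) : ℕ) < k
      have he : mkJS x.1.2.1 x.1.2.2.1 x.1.2.2.2.1.2 (t + x.1.2.1) = x.1.2.2.2.1.2 t := by
        unfold mkJS
        rw [dif_neg (Nat.not_lt.mpr (Nat.le_add_left _ _))]
        exact congrArg x.1.2.2.2.1.2 (Nat.add_sub_cancel t x.1.2.1)
      rw [he]
      exact hk⟩,
    by
      have hm := x.2.1
      have h' : x.1.2.1 - 1 < x.1.2.1 := by omega
      refine ⟨x.1.2.1 - 1, ?_⟩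
      show mkHS x.1.2.1 x.1.2.2.1 x.1.2.2.2.1.1 (x.1.2.1 - 1) = 1
      unfold mkHS
      rw [dif_pos h', (x.2.2 ⟨x.1.2.1 - 1, h'⟩).1 (by show x.1.2.1 - 1 + 1 = x.1.2.1; omega)]⟩

def eBinv {n k : ℕ} (h : {q : QTt n k // ∃ t, q.1.1 t = 1}) : {x : TB n k // GoodT x} :=
  ⟨⟨h.1.1.2 (Nat.find h.2), Nat.find h.2 + 1,
     (fun t : Fin (Nat.find h.2 + 1) => (h.1.1.1 (t : ℕ) - 1, h.1.1.2 (t : ℕ))),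
     ⟨((fun t => h.1.1.1 (t + (Nat.find h.2 + 1))),
       (fun t => h.1.1.2 (t + (Nat.find h.2 + 1)))),
      ⟨fun t => h.1.2.1 _, inpk_shift_of _ _ h.1.2.2⟩⟩⟩,
   by
     refine ⟨by show 1 ≤ Nat.find h.2 + 1; omega, fun t => ⟨fun hte => ?_, fun htl => ?_⟩⟩
     · have hte' : (t : ℕ) + 1 = Nat.find h.2 + 1 := hte
       have hT : (t : ℕ) = Nat.find h.2 := by omega
       show (h.1.1.1 (t : ℕ) - 1, h.1.1.2 (t : ℕ)) = (0, h.1.1.2 (Nat.find h.2))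
       rw [hT, Nat.find_spec h.2]
     · have htl' : (t : ℕ) + 1 < Nat.find h.2 + 1 := htl
       have h1 := h.1.2.1 (t : ℕ)
       have h2 : h.1.1.1 (t : ℕ) ≠ 1 := Nat.find_min h.2 (by omega)
       show 1 ≤ h.1.1.1 (t : ℕ) - 1
       omega⟩

def eBequiv (n k : ℕ) : {x : TB n k // GoodT x} ≃ {q : QTt n k // ∃ t, q.1.1 t = 1} where
  toFun := eBto
  invFun := eBinv
  left_inv := by
    intro x
    obtain ⟨⟨l, m, q, ⟨⟨cs, cj⟩, hc⟩⟩, hg⟩ := x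
    have hg1 : 1 ≤ m := hg.1
    have hlast : ∀ h' : m - 1 < m, q ⟨m - 1, h'⟩ = (0, l) := fun h' =>
      (hg.2 ⟨m - 1, h'⟩).1 (by show m - 1 + 1 = m; omega)
    have hspec : mkHS m q cs (m - 1) = 1 := by
      unfold mkHS
      rw [dif_pos (by omega : m - 1 < m), hlast (by omega)]
    have hmin : ∀ u, u < m - 1 → mkHS m q cs u ≠ 1 := by
      intro u hu
      have hu' : u < m := by omega
      unfold mkHS
      rw [dif_pos hu']
      have h5 : 1 ≤ (q ⟨u, hu'⟩).1 := (hg.2 ⟨u, hu'⟩).2 (by show u + 1 < m; omega)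
      omega
    have hfind : Nat.find (eBto (⟨⟨l, m, q, ⟨(cs, cj), hc⟩⟩, hg⟩ :
        {x : TB n k // GoodT x})).2 = m - 1 := by
      refine le_antisymm (Nat.find_le hspec) ?_
      by_contra hcon
      push_neg at hcon
      exact hmin _ hcon (Nat.find_spec (eBto (⟨⟨l, m, q, ⟨(cs, cj), hc⟩⟩, hg⟩ :
        {x : TB n k // GoodT x})).2)
    apply Subtype.ext
    refine TB_ext ?_ ?_ ?_ ?_
    · rw [hfind]
      show mkJS m q cj (m - 1) = l
      unfold mkJS
      rw [dif_pos (by omega : m - 1 < m), hlast (by omega)]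
    · rw [hfind]; omega
    · intro t h h'
      have e1 : mkHS m q cs t = (q ⟨t, h'⟩).1 + 1 := by
        unfold mkHS; rw [dif_pos h']
      have e2 : mkJS m q cj t = (q ⟨t, h'⟩).2 := by
        unfold mkJS; rw [dif_pos h']
      show (mkHS m q cs t - 1, mkJS m q cj t) = q ⟨t, h'⟩
      rw [e1, e2]
      exact congrArg₂ Prod.mk (by omega) rfl
    · apply Subtype.ext
      refine congrArg₂ Prod.mk ?_ ?_
      · funext t
        show mkHS m q cs (t + (Nat.find _ + 1)) = cs t
        rw [show t + (Nat.find (eBto (⟨⟨l, m, q, ⟨(cs, cj), hc⟩⟩, hg⟩ :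
          {x : TB n k // GoodT x})).2 + 1) = t + m from by rw [hfind]; omega]
        unfold mkHS
        rw [dif_neg (by omega)]
        congr 1
        omega
      · funext t
        show mkJS m q cj (t + (Nat.find _ + 1)) = cj t
        rw [show t + (Nat.find (eBto (⟨⟨l, m, q, ⟨(cs, cj), hc⟩⟩, hg⟩ :
          {x : TB n k // GoodT x})).2 + 1) = t + m from by rw [hfind]; omega]
        unfold mkJS
        rw [dif_neg (by omega)]
        congr 1
        omega
  right_inv := by
    intro hq
    obtain ⟨⟨⟨hsq, jsq⟩, hpos, hbk⟩, hex⟩ := hq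
    apply Subtype.ext
    apply Subtype.ext
    refine congrArg₂ Prod.mk ?_ ?_
    · funext t
      show mkHS (Nat.find hex + 1)
        (fun s : Fin (Nat.find hex + 1) => (hsq (s : ℕ) - 1, jsq (s : ℕ)))
        (fun s => hsq (s + (Nat.find hex + 1))) t = hsq t
      unfold mkHS
      split
      · show hsq t - 1 + 1 = hsq t
        have hp : 1 ≤ hsq t := hpos t
        omega
      · show hsq (t - (Nat.find hex + 1) + (Nat.find hex + 1)) = hsq t
        congr 1
        omega
    · funext t
      show mkJS (Nat.find hex + 1)
        (fun s : Fin (Nat.find hex + 1) => (hsq (s : ℕ) - 1, jsq (s : ℕ)))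
        (fun s => jsq (s + (Nat.find hex + 1))) t = jsq t
      unfold mkJS
      split
      · rfl
      · show jsq (t - (Nat.find hex + 1) + (Nat.find hex + 1)) = jsq t
        congr 1
        omega

end Stmt5Aux

/-- Let `(S, V)` be a complete semiring-semimodule pair,
`M ∈ (S^{n×n})^{p*×p*}` a roc matrix with counter symbol `p`, and `0 ≤ k ≤ n`.
Then `(M^{ω,k})_{p²} = (M^{ω,k})_p + (M*)_{p,ε} · (M^{ω,k})_p`. -/
theorem stmt_5 {S V : Type} (R : CSOps S) (P : CPOps S V) (hR : R.IsComplete)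
    (hP : P.IsComplete R) {n : ℕ} (hn : 1 ≤ n) (M : IMat n S) (hM : IsRoc R M)
    (k : ℕ) (hk : k ≤ n) :
    mOmegaK P M k 2 =
      vecAdd P (mOmegaK P M k 1) (matVec P (iStar R M 1 0) (mOmegaK P M k 1)) := by
  classical
  funext j
  show P.vSum (fun q : Stmt5Aux.QTt n k => P.iProd (pathEntry M 2 j q.1.1 q.1.2))
      = P.vadd (mOmegaK P M k 1 j)
          (P.vSum fun l : Fin n => P.smul (iStar R M 1 0 j l) (mOmegaK P M k 1 l))
  rw [Stmt5Aux.vsum_split hP (fun q : Stmt5Aux.QTt n k => ∃ t, q.1.1 t = 1)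
    (fun q : Stmt5Aux.QTt n k => P.iProd (pathEntry M 2 j q.1.1 q.1.2))]
  refine congrArg₂ P.vadd ?_ ?_
  · -- Part A: paths that never reach counter value 1 again
    show P.vSum (fun x : {q : Stmt5Aux.QTt n k // ¬ ∃ t, q.1.1 t = 1} =>
        P.iProd (pathEntry M 2 j x.1.1.1 x.1.1.2))
      = P.vSum (fun q : Stmt5Aux.QTt n k => P.iProd (pathEntry M 1 j q.1.1 q.1.2))
    refine Eq.trans ?_ (Stmt5Aux.vsum_equiv hP (Stmt5Aux.eAe n k)
      (fun q : Stmt5Aux.QTt n k => P.iProd (pathEntry M 1 j q.1.1 q.1.2)))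
    refine Stmt5Aux.vsum_congr (fun x => ?_)
    show P.iProd (pathEntry M 2 j x.1.1.1 x.1.1.2)
      = P.iProd (pathEntry M 1 j (fun t => x.1.1.1 t - 1) x.1.1.2)
    refine congrArg P.iProd (funext fun t => ?_)
    have h2all : ∀ u, 2 ≤ x.1.1.1 u := fun u => by
      have h1 : 1 ≤ x.1.1.1 u := x.1.2.1 u
      have h2 : x.1.1.1 u ≠ 1 := fun h => x.2 ⟨u, h⟩
      omega
    cases t with
    | zero =>
      exact congrFun (congrFun (Stmt5Aux.Mshift hM (le_refl 2) (x.1.2.1 0)) j) (x.1.1.2 0)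
    | succ t =>
      exact congrFun (congrFun (Stmt5Aux.Mshift hM (h2all t) (x.1.2.1 (t + 1)))
        (x.1.1.2 t)) (x.1.1.2 (t + 1))
  · -- Part B: paths that reach counter value 1
    have hzero : ∀ x : Stmt5Aux.TB n k, ¬ Stmt5Aux.GoodT x →
        Stmt5Aux.Wt R P M k j x = P.vzero := by
      intro x hx
      obtain ⟨l, m, q, tq⟩ := x
      show P.smul (Stmt5Aux.pw R M m 1 j 0 l q)
        (P.iProd (pathEntry M 1 l tq.1.1 tq.1.2)) = P.vzero
      have hz : Stmt5Aux.pw R M m 1 j 0 l q = R.zero := by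
        rcases Nat.eq_zero_or_pos m with hm | hm
        · subst hm
          show (if (1 : ℕ) = 0 ∧ j = l then R.one else R.zero) = R.zero
          rw [if_neg (by rintro ⟨h1, -⟩; exact one_ne_zero h1)]
        · have hx2 : ¬ ∀ t : Fin m,
              (((t : ℕ) + 1 = m → q t = (0, l)) ∧ ((t : ℕ) + 1 < m → 1 ≤ (q t).1)) := by
            intro hall
            exact hx ⟨hm, hall⟩
          obtain ⟨t, ht⟩ := not_forall.mp hx2
          rcases not_and_or.mp ht with h1 | h2
          · push_neg at h1
            exact Stmt5Aux.pw_last_zero hR 0 l m q 1 j t h1.1 h1.2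
          · push_neg at h2
            exact Stmt5Aux.pw_mid_zero hR hM 0 l m q 1 j t h2.1 (by omega)
      rw [hz, hP.zero_smul]
    have hB1 : P.vSum (fun l : Fin n => P.smul (iStar R M 1 0 j l) (mOmegaK P M k 1 l))
        = P.vSum (Stmt5Aux.Wt R P M k j) := by
      refine Eq.trans (Stmt5Aux.vsum_congr (fun l => ?_))
        (Stmt5Aux.vsum_sigma hP (Stmt5Aux.Wt R P M k j))
      refine Eq.trans ?_ (Stmt5Aux.vsum_sigma hP
        (fun x : Σ m : ℕ, ((Fin m → ℕ × Fin n) × Stmt5Aux.QTt n k) =>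
          Stmt5Aux.Wt R P M k j ⟨l, x⟩))
      refine Eq.trans (hP.iSum_smul (fun m : ℕ => iMatPow R M m 1 0 j l)
        (mOmegaK P M k 1 l)) ?_
      refine Stmt5Aux.vsum_congr (fun m => ?_)
      refine Eq.trans ?_ (Stmt5Aux.vsum_prod hP
        (fun pq : (Fin m → ℕ × Fin n) × Stmt5Aux.QTt n k =>
          Stmt5Aux.Wt R P M k j ⟨l, ⟨m, pq⟩⟩))
      rw [Stmt5Aux.pow_pw hR m 1 0 j l]
      refine Eq.trans (hP.iSum_smul (Stmt5Aux.pw R M m 1 j 0 l) (mOmegaK P M k 1 l)) ?_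
      exact Stmt5Aux.vsum_congr (fun q => hP.smul_vSum (Stmt5Aux.pw R M m 1 j 0 l q)
        (fun tq : Stmt5Aux.QTt n k => P.iProd (pathEntry M 1 l tq.1.1 tq.1.2)))
    have key : ∀ h : {q : Stmt5Aux.QTt n k // ∃ t, q.1.1 t = 1},
        P.iProd (pathEntry M 2 j h.1.1.1 h.1.1.2)
          = Stmt5Aux.Wt R P M k j ((Stmt5Aux.eBequiv n k).symm h).1 := by
      intro h
      obtain ⟨⟨⟨hsq, jsq⟩, hpos, hbk⟩, hex⟩ := h
      symm
      show P.smul (Stmt5Aux.pw R M (Nat.find hex + 1) 1 j 0 (jsq (Nat.find hex))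
          (fun t : Fin (Nat.find hex + 1) => (hsq (t : ℕ) - 1, jsq (t : ℕ))))
        (P.iProd (pathEntry M 1 (jsq (Nat.find hex))
          (fun t => hsq (t + (Nat.find hex + 1))) (fun t => jsq (t + (Nat.find hex + 1)))))
        = P.iProd (pathEntry M 2 j hsq jsq)
      have hspec : hsq (Nat.find hex) = 1 := Nat.find_spec hex
      have h2mid : ∀ t, t < Nat.find hex → 2 ≤ hsq t := fun t ht => by
        have h1 : 1 ≤ hsq t := hpos t
        have h2 : hsq t ≠ 1 := Nat.find_min hex ht
        omega
      rw [← Stmt5Aux.prodpw hR hM (Nat.find hex) 2 j hsq jsq (le_refl 2) h2mid hspec,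
          ← Stmt5Aux.pathEntry_tail 2 j hsq jsq (Nat.find hex) hspec]
      exact Stmt5Aux.prefix_iProd hP (Nat.find hex + 1) (pathEntry M 2 j hsq jsq)
    calc P.vSum (fun x : {q : Stmt5Aux.QTt n k // ∃ t, q.1.1 t = 1} =>
            P.iProd (pathEntry M 2 j x.1.1.1 x.1.1.2))
        = P.vSum (fun h : {q : Stmt5Aux.QTt n k // ∃ t, q.1.1 t = 1} =>
            Stmt5Aux.Wt R P M k j ((Stmt5Aux.eBequiv n k).symm h).1) :=
          Stmt5Aux.vsum_congr (fun h => key h)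
      _ = P.vSum (fun x : {x : Stmt5Aux.TB n k // Stmt5Aux.GoodT x} =>
            Stmt5Aux.Wt R P M k j x.1) :=
          Stmt5Aux.vsum_equiv hP (Stmt5Aux.eBequiv n k)
            (fun x : {x : Stmt5Aux.TB n k // Stmt5Aux.GoodT x} => Stmt5Aux.Wt R P M k j x.1)
      _ = P.vSum (Stmt5Aux.Wt R P M k j) :=
          (Stmt5Aux.vsum_drop hP Stmt5Aux.GoodT (Stmt5Aux.Wt R P M k j) hzero).symm
      _ = P.vSum (fun l : Fin n => P.smul (iStar R M 1 0 j l) (mOmegaK P M k 1 l)) :=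
          hB1.symm
end

section
/- Let (S, V) be a complete semiring-semimodule pair, let M ∈ (S^{n×n})^{p*×p*} be a restricted one-counter (roc) matrix with counter symbol p, and let 0 ≤ k ≤ n. Then (M^{ω,k})_p = (M_{p,p²} + M_{p,p²}(M*)_{p,ε} + M_{p,p}) · (M^{ω,k})_p. -/
/-! ### Auxiliary lemmas for Statement 6 -/

section Stmt6Aux

/-- The fiber of a sigma type over a point of the base. -/
def sigmaFiberEquiv' {ι : Type} {κ : ι → Type} (i : ι) :
    κ i ≃ {p : Σ i, κ i // p.1 = i} where
  toFun j := ⟨⟨i, j⟩, rfl⟩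
  invFun p := cast (congrArg κ p.2) p.1.2
  left_inv j := rfl
  right_inv p := by
    obtain ⟨⟨i', j⟩, h⟩ := p
    subst h
    rfl

namespace CSOps.IsComplete

variable {S : Type} {R : CSOps S} (hR : R.IsComplete)
include hR

lemma add_zero' (a : S) : R.add a R.zero = a := by
  rw [hR.add_comm]; exact hR.zero_add a

lemma iSum_zero {ι : Type} : R.iSum (fun _ : ι => R.zero) = R.zero := by
  have h : (fun _ : ι => R.zero) = fun _ : ι => R.mul R.zero R.one := by
    funext i; rw [hR.zero_mul]
  rw [h, ← hR.mul_iSum, hR.zero_mul]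

lemma iSum_equiv {ι κ : Type} (e : ι ≃ κ) (f : κ → S) :
    R.iSum (fun i => f (e i)) = R.iSum f := by
  rw [← hR.iSum_partition (g := e) (f := fun i => f (e i))]
  congr 1
  funext j
  rw [hR.iSum_single _ ⟨e.symm j, e.apply_symm_apply j⟩
    (fun i => Subtype.ext (e.injective (by rw [i.2, e.apply_symm_apply])))]
  simp

set_option linter.unusedSectionVars false in
lemma iSum_congr {ι : Type} {f g : ι → S} (h : ∀ i, f i = g i) :
    R.iSum f = R.iSum g := congrArg R.iSum (funext h)

lemma iSum_eq_single {ι : Type} (f : ι → S) (i₀ : ι)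
    (h : ∀ i, i ≠ i₀ → f i = R.zero) : R.iSum f = f i₀ := by
  classical
  rw [← hR.iSum_partition (g := fun i => decide (i = i₀)) (f := f),
    hR.iSum_pair _ true false (by simp) (fun b => by cases b <;> simp)]
  have h1 : R.iSum (fun i : {i : ι // decide (i = i₀) = true} => f i.1) = f i₀ := by
    refine hR.iSum_single _ (⟨i₀, by simp⟩ : {i : ι // decide (i = i₀) = true}) ?_
    intro i; exact Subtype.ext (by simpa using i.2)
  have h2 : R.iSum (fun i : {i : ι // decide (i = i₀) = false} => f i.1) = R.zero := by
    have h3 : (fun i : {i : ι // decide (i = i₀) = false} => f i.1) =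
        fun _ => R.zero := by
      funext i; exact h i.1 (by simpa using i.2)
    rw [h3, hR.iSum_zero]
  rw [h1, h2, hR.add_zero']

lemma iSum_sigma {ι : Type} {κ : ι → Type} (f : (Σ i, κ i) → S) :
    R.iSum (fun i => R.iSum (fun j : κ i => f ⟨i, j⟩)) = R.iSum f := by
  rw [← hR.iSum_partition (g := Sigma.fst) (f := f)]
  congr 1
  funext i
  exact hR.iSum_equiv (sigmaFiberEquiv' i) (fun p => f p.1)

end CSOps.IsComplete

namespace CPOps.IsComplete

variable {S V : Type} {R : CSOps S} {P : CPOps S V} (hP : P.IsComplete R)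
include hP

lemma vadd_zero' (v : V) : P.vadd v P.vzero = v := by
  rw [hP.vadd_comm]; exact hP.vzero_vadd v

lemma vSum_zero {ι : Type} : P.vSum (fun _ : ι => P.vzero) = P.vzero := by
  have h : (fun _ : ι => P.vzero) = fun _ : ι => P.smul R.zero P.vzero := by
    funext i; rw [hP.zero_smul]
  rw [h, ← hP.iSum_smul, hP.smul_vzero]

lemma vSum_equiv {ι κ : Type} (e : ι ≃ κ) (f : κ → V) :
    P.vSum (fun i => f (e i)) = P.vSum f := by
  rw [← hP.vSum_partition (g := e) (f := fun i => f (e i))]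
  congr 1
  funext j
  rw [hP.vSum_single _ ⟨e.symm j, e.apply_symm_apply j⟩
    (fun i => Subtype.ext (e.injective (by rw [i.2, e.apply_symm_apply])))]
  simp

set_option linter.unusedSectionVars false in
lemma vSum_congr {ι : Type} {f g : ι → V} (h : ∀ i, f i = g i) :
    P.vSum f = P.vSum g := congrArg P.vSum (funext h)

lemma vSum_sigma {ι : Type} {κ : ι → Type} (f : (Σ i, κ i) → V) :
    P.vSum (fun i => P.vSum (fun j : κ i => f ⟨i, j⟩)) = P.vSum f := by
  rw [← hP.vSum_partition (g := Sigma.fst) (f := f)]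
  congr 1
  funext i
  exact hP.vSum_equiv (sigmaFiberEquiv' i) (fun p => f p.1)

lemma vSum_vadd {ι : Type} (f g : ι → V) :
    P.vSum (fun i => P.vadd (f i) (g i)) = P.vadd (P.vSum f) (P.vSum g) := by
  classical
  calc P.vSum (fun i => P.vadd (f i) (g i))
      = P.vSum (fun i => P.vSum (fun q : {p : ι × Bool // p.1 = i} =>
          cond q.1.2 (f q.1.1) (g q.1.1))) := by
        refine hP.vSum_congr (fun i => ?_)
        refine (hP.vSum_pair (fun q : {p : ι × Bool // p.1 = i} =>
            cond q.1.2 (f q.1.1) (g q.1.1)) ⟨(i, true), rfl⟩ ⟨(i, false), rfl⟩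
          (by intro h; have := congrArg (fun q => q.1.2) h; simp at this) ?_).symm
        rintro ⟨⟨i', b⟩, rfl⟩
        cases b
        · right; rfl
        · left; rfl
    _ = P.vSum (fun p : ι × Bool => cond p.2 (f p.1) (g p.1)) :=
        hP.vSum_partition Prod.fst (fun p : ι × Bool => cond p.2 (f p.1) (g p.1))
    _ = P.vadd (P.vSum (fun q : {p : ι × Bool // p.2 = true} =>
            cond q.1.2 (f q.1.1) (g q.1.1)))
          (P.vSum (fun q : {p : ι × Bool // p.2 = false} =>
            cond q.1.2 (f q.1.1) (g q.1.1))) := by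
        rw [← hP.vSum_partition (g := Prod.snd)
          (f := fun p : ι × Bool => cond p.2 (f p.1) (g p.1))]
        exact hP.vSum_pair _ true false (by simp) (fun b => by cases b <;> simp)
    _ = P.vadd (P.vSum f) (P.vSum g) := by
        congr 1
        · exact (hP.vSum_equiv
            (⟨fun i => ⟨(i, true), rfl⟩, fun p => p.1.1, fun i => rfl,
              fun p => by obtain ⟨⟨i, b⟩, h⟩ := p; cases h; rfl⟩ :
              ι ≃ {p : ι × Bool // p.2 = true})
            (fun q => cond q.1.2 (f q.1.1) (g q.1.1))).symm
        · exact (hP.vSum_equiv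
            (⟨fun i => ⟨(i, false), rfl⟩, fun p => p.1.1, fun i => rfl,
              fun p => by obtain ⟨⟨i, b⟩, h⟩ := p; cases h; rfl⟩ :
              ι ≃ {p : ι × Bool // p.2 = false})
            (fun q => cond q.1.2 (f q.1.1) (g q.1.1))).symm

lemma vSum_split {ι : Type} (f : ι → V) (φ : ι → Prop) :
    P.vSum f = P.vadd (P.vSum fun i : {i // φ i} => f i.1)
      (P.vSum fun i : {i // ¬ φ i} => f i.1) := by
  classical
  rw [← hP.vSum_partition (g := fun i => decide (φ i)) (f := f),
    hP.vSum_pair _ true false (by simp) (fun b => by cases b <;> simp)]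
  congr 1
  · exact (hP.vSum_equiv (Equiv.subtypeEquivRight
      (fun i => (decide_eq_true_iff).symm) : {i // φ i} ≃ {i // decide (φ i) = true})
      (fun q => f q.1)).symm
  · refine (hP.vSum_equiv (Equiv.subtypeEquivRight (fun i => ?_) :
      {i // ¬ φ i} ≃ {i // decide (φ i) = false}) (fun q => f q.1)).symm
    simp

lemma vSum_drop {ι : Type} (f : ι → V) (φ : ι → Prop)
    (h : ∀ i, ¬ φ i → f i = P.vzero) :
    P.vSum f = P.vSum fun i : {i // φ i} => f i.1 := by
  rw [hP.vSum_split f φ]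
  have h2 : (fun i : {i // ¬ φ i} => f i.1) = fun _ => P.vzero :=
    funext fun i => h i.1 i.2
  rw [h2, hP.vSum_zero, hP.vadd_zero']

lemma vSum_nat_succ (F : ℕ → V) (h0 : F 0 = P.vzero) :
    P.vSum F = P.vSum (fun m => F (m + 1)) := by
  rw [hP.vSum_drop F (fun m => m ≠ 0)
    (by intro i hi; rw [not_not.mp hi]; exact h0)]
  exact (hP.vSum_equiv (⟨fun m => ⟨m + 1, Nat.succ_ne_zero m⟩, fun p => p.1 - 1,
    fun m => rfl, fun p => Subtype.ext (Nat.succ_pred_eq_of_pos (Nat.pos_of_ne_zero p.2))⟩ : ℕ ≃ {m : ℕ // m ≠ 0})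
    (fun p => F p.1)).symm

end CPOps.IsComplete

section Chunk2

variable {S V : Type} {R : CSOps S} {P : CPOps S V}

lemma listProd_cons (R : CSOps S) (x : S) (l : List S) :
    R.listProd (x :: l) = R.mul x (R.listProd l) := rfl

lemma range'_map_shift {α : Type} (s : ℕ → α) : ∀ (N a : ℕ),
    (List.range' (a + 1) N).map s = (List.range' a N).map (fun t => s (t + 1))
  | 0, _ => rfl
  | N + 1, a => by
    rw [List.range'_succ, List.range'_succ, List.map_cons, List.map_cons,
      range'_map_shift s N (a + 1)]

lemma rangeProd_zero_succ (R : CSOps S) (s : ℕ → S) (N : ℕ) :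
    R.rangeProd s 0 (N + 1) = R.mul (s 0) (R.rangeProd (fun t => s (t + 1)) 0 N) := by
  show R.listProd ((List.range' 0 (N + 1 - 0)).map s)
      = R.mul (s 0) (R.listProd ((List.range' 0 (N - 0)).map fun t => s (t + 1)))
  rw [Nat.sub_zero, Nat.sub_zero, List.range'_succ, List.map_cons, listProd_cons,
    range'_map_shift]

lemma rangeProd_congr (R : CSOps S) : ∀ (N : ℕ) (s s' : ℕ → S),
    (∀ t, t < N → s t = s' t) → R.rangeProd s 0 N = R.rangeProd s' 0 N
  | 0, _, _, _ => rfl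
  | N + 1, s, s', h => by
    rw [rangeProd_zero_succ, rangeProd_zero_succ, h 0 (by omega),
      rangeProd_congr R N (fun t => s (t + 1)) (fun t => s' (t + 1))
        (fun t ht => h (t + 1) (by omega))]

lemma rangeProd_eq_zero (hR : R.IsComplete) : ∀ (N : ℕ) (s : ℕ → S) (t : ℕ),
    t < N → s t = R.zero → R.rangeProd s 0 N = R.zero
  | 0, _, t, ht, _ => absurd ht (by omega)
  | N + 1, s, 0, _, h => by rw [rangeProd_zero_succ, h, hR.zero_mul]
  | N + 1, s, t + 1, ht, h => by
    rw [rangeProd_zero_succ,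
      rangeProd_eq_zero hR N (fun u => s (u + 1)) t (by omega) h, hR.mul_zero]

lemma iProd_zero_first (hP : P.IsComplete R) (s : ℕ → S) (h : s 0 = R.zero) :
    P.iProd s = P.vzero := by
  rw [← hP.smul_iProd_shift s, h, hP.zero_smul]

lemma finprod_smul (hP : P.IsComplete R) : ∀ (N : ℕ) (s : ℕ → S),
    P.smul (R.rangeProd s 0 N) (P.iProd fun t => s (N + t)) = P.iProd s
  | 0, s => by
    have h1 : (fun t => s (0 + t)) = s := funext fun t => by rw [Nat.zero_add]
    rw [h1]
    show P.smul R.one (P.iProd s) = P.iProd s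
    exact hP.one_smul _
  | N + 1, s => by
    have h2 : (fun t => s (N + 1 + t)) = fun t => (fun u => s (u + 1)) (N + t) :=
      funext fun t => congrArg s (by omega)
    rw [rangeProd_zero_succ, hP.mul_smul, h2,
      finprod_smul hP N (fun u => s (u + 1)), hP.smul_iProd_shift]

lemma roc_shift {n : ℕ} {M : IMat n S} (hM : IsRoc R M) {i j : ℕ} (hi : 1 ≤ i) :
    M (i + 1) (j + 1) = M i j := by
  by_cases h1 : j = i + 1
  · subst h1
    rw [(hM.1 (i + 1) (by omega)).1, (hM.1 i hi).1]
  · by_cases h2 : j = i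
    · rw [h2, (hM.1 (i + 1) (by omega)).2.1, (hM.1 i hi).2.1]
    · by_cases h3 : j + 1 = i
      · have e1 := (hM.1 (i + 1) (by omega)).2.2
        have e2 := (hM.1 i hi).2.2
        have q1 : i + 1 - 1 = j + 1 := by omega
        have q2 : i - 1 = j := by omega
        rw [q1] at e1
        rw [q2] at e2
        rw [e1, e2]
      · rw [hM.2 (i + 1) (j + 1) (Or.inr ⟨by omega, by omega, by omega⟩),
          hM.2 i j (Or.inr ⟨h1, h2, h3⟩)]

/-- Prepending one element to a sequence. -/
def conss {α : Type} (x : α) (s : ℕ → α) : ℕ → α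
  | 0 => x
  | t + 1 => s t

lemma inPk_shift {n k N : ℕ} {js js' : ℕ → Fin n} (h : ∀ t, js' (N + t) = js t) :
    InPk n k js ↔ InPk n k js' := by
  constructor
  · intro H N₀
    obtain ⟨t, ht, hlt⟩ := H N₀
    exact ⟨N + t, by omega, by rw [h t]; exact hlt⟩
  · intro H N₀
    obtain ⟨t, ht, hlt⟩ := H (N + N₀)
    refine ⟨t - N, by omega, ?_⟩
    have h2 := h (t - N)
    have h3 : N + (t - N) = t := by omega
    rw [h3] at h2
    rw [← h2]
    exact hlt

lemma pow_expand {n : ℕ} (hR : R.IsComplete) (M : IMat n S) (mm : ℕ) :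
    ∀ (i : ℕ) (a : Fin n) (j : ℕ) (b : Fin n),
    iMatPow R M (mm + 1) i j a b =
      R.iSum (fun c : {c : ℕ → ℕ × Fin n // ∀ t, mm ≤ t → c t = (j, b)} =>
        R.rangeProd (pathEntry M i a (fun t => (c.1 t).1) (fun t => (c.1 t).2))
          0 (mm + 1)) := by
  induction mm with
  | zero =>
    intro i a j b
    have hL : iMatPow R M 1 i j a b = M i j a b := by
      show R.iSum (fun h : ℕ =>
        R.iSum (fun x : Fin n => R.mul (M i h a x) (iMatOne R h j x b))) = _
      rw [hR.iSum_eq_single _ j ?hoff]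
      case hoff =>
        intro h hne
        have hz : (fun x : Fin n => R.mul (M i h a x) (iMatOne R h j x b)) =
            fun _ => R.zero := by
          funext x
          have hone : iMatOne R h j x b = R.zero := by
            simp [iMatOne, bZero, hne]
          rw [hone, hR.mul_zero]
        rw [hz, hR.iSum_zero]
      rw [hR.iSum_eq_single _ b ?hoff2]
      case hoff2 =>
        intro x hx
        have hone : iMatOne R j j x b = R.zero := by
          simp [iMatOne, bOne, hx]
        rw [hone, hR.mul_zero]
      have hone : iMatOne R j j b b = R.one := by
        simp [iMatOne, bOne]
      rw [hone, hR.mul_one]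
    rw [hL]
    rw [hR.iSum_single _ (⟨fun _ => (j, b), fun t _ => rfl⟩ :
        {c : ℕ → ℕ × Fin n // ∀ t, 0 ≤ t → c t = (j, b)})
      (fun c => Subtype.ext (funext fun t => c.2 t (Nat.zero_le t)))]
    rw [rangeProd_zero_succ]
    show M i j a b = R.mul (M i j a b) (R.rangeProd _ 0 0)
    show M i j a b = R.mul (M i j a b) R.one
    rw [hR.mul_one]
  | succ mm IH =>
    intro i a j b
    calc iMatPow R M (mm + 2) i j a b
        = R.iSum (fun h : ℕ => R.iSum (fun x : Fin n =>
            R.iSum (fun c : {c : ℕ → ℕ × Fin n // ∀ t, mm ≤ t → c t = (j, b)} =>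
              R.mul (M i h a x)
                (R.rangeProd (pathEntry M h x (fun t => (c.1 t).1)
                  (fun t => (c.1 t).2)) 0 (mm + 1))))) := by
          refine hR.iSum_congr (fun h => ?_)
          refine hR.iSum_congr (fun x => ?_)
          rw [IH h x j b, hR.mul_iSum]
      _ = R.iSum (fun p : Σ _h : ℕ, Σ _x : Fin n,
            {c : ℕ → ℕ × Fin n // ∀ t, mm ≤ t → c t = (j, b)} =>
            R.mul (M i p.1 a p.2.1)
              (R.rangeProd (pathEntry M p.1 p.2.1 (fun t => (p.2.2.1 t).1)
                (fun t => (p.2.2.1 t).2)) 0 (mm + 1))) := by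
          rw [← hR.iSum_sigma]
          refine hR.iSum_congr (fun h => ?_)
          rw [← hR.iSum_sigma]
      _ = R.iSum (fun c : {c : ℕ → ℕ × Fin n // ∀ t, mm + 1 ≤ t → c t = (j, b)} =>
            R.rangeProd (pathEntry M i a (fun t => (c.1 t).1) (fun t => (c.1 t).2))
              0 (mm + 2)) := by
          refine Eq.trans ?_ (hR.iSum_equiv
            (⟨fun p => ⟨conss (p.1, p.2.1) p.2.2.1, ?_⟩,
              fun c => ⟨(c.1 0).1, (c.1 0).2, ⟨fun t => c.1 (t + 1),
                fun t ht => c.2 (t + 1) (by omega)⟩⟩,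
              fun p => rfl, fun c => Subtype.ext (funext fun t => ?_)⟩ :
              (Σ _h : ℕ, Σ _x : Fin n,
                {c : ℕ → ℕ × Fin n // ∀ t, mm ≤ t → c t = (j, b)}) ≃
              {c : ℕ → ℕ × Fin n // ∀ t, mm + 1 ≤ t → c t = (j, b)}) _)
          · refine hR.iSum_congr (fun p => ?_)
            conv_rhs => rw [rangeProd_zero_succ]
            refine congr_arg₂ R.mul rfl ?_
            refine rangeProd_congr R (mm + 1) _ _ (fun t ht => ?_)
            cases t with
            | zero => rfl
            | succ u => rfl
          · intro t ht
            cases t with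
            | zero => omega
            | succ u => exact p.2.2.2 u (by omega)
          · cases t with
            | zero => rfl
            | succ u => rfl

end Chunk2

section Chunk3

variable {S V : Type} {R : CSOps S} {P : CPOps S V}

/-- The index type of `(M^{ω,k})_{p}`. -/
abbrev QT (n k : ℕ) : Type :=
  {q : (ℕ → ℕ) × (ℕ → Fin n) // (∀ t, 1 ≤ q.1 t) ∧ InPk n k q.2}

abbrev phi1 (n k : ℕ) (q : QT n k) : Prop := q.1.1 0 = 1
abbrev Sub1 (n k : ℕ) : Type := {q : QT n k // ¬ phi1 n k q}
abbrev phi2 (n k : ℕ) (q : Sub1 n k) : Prop := q.1.1.1 0 = 2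
abbrev Sub2 (n k : ℕ) : Type := {q : Sub1 n k // phi2 n k q}
abbrev phi3 (n k : ℕ) (q : Sub2 n k) : Prop := ∃ T, 1 ≤ T ∧ q.1.1.1.1 T = 1

/-- Descent segments: finite paths from `(1,m)` to `(0,l)` of length `mm+1`,
staying at positive levels before the end. -/
abbrev DgT {n : ℕ} (l : Fin n) (mm : ℕ) : Type :=
  {c : {c : ℕ → ℕ × Fin n // ∀ t, mm ≤ t → c t = ((0 : ℕ), l)} //
    ∀ t, t < mm → 1 ≤ (c.1 t).1}

/-- The index type for the `A·(M*)` class. -/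
abbrev Idx (n k : ℕ) : Type :=
  Σ l : Fin n, Σ _m : Fin n, Σ mm : ℕ, Σ _c : DgT l mm, QT n k

/-- Level sequence of the built path for the `A·(M*)` class. -/
def bHs {n : ℕ} (mm : ℕ) (c : ℕ → ℕ × Fin n) (h : ℕ → ℕ) : ℕ → ℕ := fun t =>
  if t = 0 then 2 else if t ≤ mm + 1 then (c (t - 1)).1 + 1 else h (t - (mm + 2))

/-- State sequence of the built path for the `A·(M*)` class. -/
def bJs {n : ℕ} (m : Fin n) (mm : ℕ) (c : ℕ → ℕ × Fin n) (j : ℕ → Fin n) :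
    ℕ → Fin n := fun t =>
  if t = 0 then m else if t ≤ mm + 1 then (c (t - 1)).2 else j (t - (mm + 2))

lemma bHs_mid {n : ℕ} (mm : ℕ) (c : ℕ → ℕ × Fin n) (h : ℕ → ℕ) (t : ℕ)
    (h1 : 1 ≤ t) (h2 : t ≤ mm + 1) : bHs mm c h t = (c (t - 1)).1 + 1 := by
  unfold bHs; rw [if_neg (by omega), if_pos h2]

lemma bHs_tope {n : ℕ} (mm : ℕ) (c : ℕ → ℕ × Fin n) (h : ℕ → ℕ) (t : ℕ)
    (h1 : mm + 2 ≤ t) : bHs mm c h t = h (t - (mm + 2)) := by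
  unfold bHs; rw [if_neg (by omega), if_neg (by omega)]

lemma bHs_top' {n : ℕ} (mm : ℕ) (c : ℕ → ℕ × Fin n) (h : ℕ → ℕ) (t : ℕ) :
    bHs mm c h (mm + 2 + t) = h t := by
  rw [bHs_tope mm c h _ (by omega)]; congr 1; omega

lemma bJs_mid {n : ℕ} (m : Fin n) (mm : ℕ) (c : ℕ → ℕ × Fin n) (j : ℕ → Fin n)
    (t : ℕ) (h1 : 1 ≤ t) (h2 : t ≤ mm + 1) : bJs m mm c j t = (c (t - 1)).2 := by
  unfold bJs; rw [if_neg (by omega), if_pos h2]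

lemma bJs_tope {n : ℕ} (m : Fin n) (mm : ℕ) (c : ℕ → ℕ × Fin n) (j : ℕ → Fin n)
    (t : ℕ) (h1 : mm + 2 ≤ t) : bJs m mm c j t = j (t - (mm + 2)) := by
  unfold bJs; rw [if_neg (by omega), if_neg (by omega)]

lemma bJs_top' {n : ℕ} (m : Fin n) (mm : ℕ) (c : ℕ → ℕ × Fin n) (j : ℕ → Fin n)
    (t : ℕ) : bJs m mm c j (mm + 2 + t) = j t := by
  rw [bJs_tope m mm c j _ (by omega)]; congr 1; omega

/-- Weight of a `C`-class path. -/
lemma wC {n k : ℕ} (hP : P.IsComplete R) (M : IMat n S) (a l : Fin n) (q : QT n k) :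
    P.smul (M 1 1 a l) (P.iProd (pathEntry M 1 l q.1.1 q.1.2))
      = P.iProd (pathEntry M 1 a (conss 1 q.1.1) (conss l q.1.2)) := by
  rw [← hP.smul_iProd_shift (pathEntry M 1 a (conss 1 q.1.1) (conss l q.1.2))]
  have htail : (fun t => pathEntry M 1 a (conss 1 q.1.1) (conss l q.1.2) (t + 1))
      = pathEntry M 1 l q.1.1 q.1.2 := by
    funext t
    cases t with
    | zero => rfl
    | succ u => rfl
  rw [htail]
  rfl

/-- Weight of an `A`-class path. -/
lemma wA {n k : ℕ} (hP : P.IsComplete R) {M : IMat n S} (hM : IsRoc R M)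
    (a l : Fin n) (q : QT n k) :
    P.smul (M 1 2 a l) (P.iProd (pathEntry M 1 l q.1.1 q.1.2))
      = P.iProd (pathEntry M 1 a (conss 2 (fun t => q.1.1 t + 1)) (conss l q.1.2)) := by
  rw [← hP.smul_iProd_shift
    (pathEntry M 1 a (conss 2 (fun t => q.1.1 t + 1)) (conss l q.1.2))]
  have htail : (fun t => pathEntry M 1 a (conss 2 (fun u => q.1.1 u + 1))
      (conss l q.1.2) (t + 1)) = pathEntry M 1 l q.1.1 q.1.2 := by
    funext t
    cases t with
    | zero =>
      show M 2 (q.1.1 0 + 1) l (q.1.2 0) = M 1 (q.1.1 0) l (q.1.2 0)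
      exact congrFun (congrFun (roc_shift hM le_rfl) l) (q.1.2 0)
    | succ u =>
      show M (q.1.1 u + 1) (q.1.1 (u + 1) + 1) (q.1.2 u) (q.1.2 (u + 1))
        = M (q.1.1 u) (q.1.1 (u + 1)) (q.1.2 u) (q.1.2 (u + 1))
      exact congrFun (congrFun (roc_shift hM (q.2.1 u)) (q.1.2 u)) (q.1.2 (u + 1))
  rw [htail]
  rfl

/-- Weight of an `A·(M*)`-class path. -/
lemma wS {n k : ℕ} (hR : R.IsComplete) (hP : P.IsComplete R) {M : IMat n S}
    (hM : IsRoc R M) (a l m : Fin n) (mm : ℕ) (c : DgT l mm) (q : QT n k) :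
    P.smul (M 1 2 a m)
      (P.smul (R.rangeProd (pathEntry M 1 m (fun t => (c.1.1 t).1)
          (fun t => (c.1.1 t).2)) 0 (mm + 1))
        (P.iProd (pathEntry M 1 l q.1.1 q.1.2)))
      = P.iProd (pathEntry M 1 a (bHs mm c.1.1 q.1.1) (bJs m mm c.1.1 q.1.2)) := by
  rw [← hP.mul_smul]
  rw [← finprod_smul hP (mm + 2)
    (pathEntry M 1 a (bHs mm c.1.1 q.1.1) (bJs m mm c.1.1 q.1.2))]
  have h1 : (fun t => pathEntry M 1 a (bHs mm c.1.1 q.1.1) (bJs m mm c.1.1 q.1.2)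
      (mm + 2 + t)) = pathEntry M 1 l q.1.1 q.1.2 := by
    funext t
    cases t with
    | zero =>
      show M (bHs mm c.1.1 q.1.1 (mm + 1)) (bHs mm c.1.1 q.1.1 (mm + 2))
          (bJs m mm c.1.1 q.1.2 (mm + 1)) (bJs m mm c.1.1 q.1.2 (mm + 2))
        = M 1 (q.1.1 0) l (q.1.2 0)
      rw [bHs_mid mm c.1.1 q.1.1 (mm + 1) (by omega) (by omega),
        bJs_mid m mm c.1.1 q.1.2 (mm + 1) (by omega) (by omega),
        bHs_tope mm c.1.1 q.1.1 (mm + 2) (by omega),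
        bJs_tope m mm c.1.1 q.1.2 (mm + 2) (by omega)]
      have e1 : mm + 1 - 1 = mm := by omega
      have e2 : mm + 2 - (mm + 2) = 0 := by omega
      rw [e1, e2, c.1.2 mm le_rfl]
    | succ u =>
      show M (bHs mm c.1.1 q.1.1 (mm + 2 + u)) (bHs mm c.1.1 q.1.1 (mm + 2 + u + 1))
          (bJs m mm c.1.1 q.1.2 (mm + 2 + u)) (bJs m mm c.1.1 q.1.2 (mm + 2 + u + 1))
        = M (q.1.1 u) (q.1.1 (u + 1)) (q.1.2 u) (q.1.2 (u + 1))
      rw [bHs_tope mm c.1.1 q.1.1 (mm + 2 + u) (by omega),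
        bHs_tope mm c.1.1 q.1.1 (mm + 2 + u + 1) (by omega),
        bJs_tope m mm c.1.1 q.1.2 (mm + 2 + u) (by omega),
        bJs_tope m mm c.1.1 q.1.2 (mm + 2 + u + 1) (by omega)]
      have e1 : mm + 2 + u - (mm + 2) = u := by omega
      have e2 : mm + 2 + u + 1 - (mm + 2) = u + 1 := by omega
      rw [e1, e2]
  rw [h1]
  congr 1
  conv_rhs => rw [rangeProd_zero_succ]
  refine congr_arg₂ R.mul rfl ?_
  refine rangeProd_congr R (mm + 1) _ _ (fun t ht => ?_)
  cases t with
  | zero =>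
    show M 1 ((c.1.1 0).1) m ((c.1.1 0).2)
      = M (bHs mm c.1.1 q.1.1 0) (bHs mm c.1.1 q.1.1 1)
          (bJs m mm c.1.1 q.1.2 0) (bJs m mm c.1.1 q.1.2 1)
    rw [bHs_mid mm c.1.1 q.1.1 1 (by omega) (by omega),
      bJs_mid m mm c.1.1 q.1.2 1 (by omega) (by omega)]
    exact (congrFun (congrFun (roc_shift hM le_rfl) m) ((c.1.1 0).2)).symm
  | succ u =>
    have hu : u < mm := by omega
    show M ((c.1.1 u).1) ((c.1.1 (u + 1)).1) ((c.1.1 u).2) ((c.1.1 (u + 1)).2)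
      = M (bHs mm c.1.1 q.1.1 (u + 1)) (bHs mm c.1.1 q.1.1 (u + 2))
          (bJs m mm c.1.1 q.1.2 (u + 1)) (bJs m mm c.1.1 q.1.2 (u + 2))
    rw [bHs_mid mm c.1.1 q.1.1 (u + 1) (by omega) (by omega),
      bHs_mid mm c.1.1 q.1.1 (u + 2) (by omega) (by omega),
      bJs_mid m mm c.1.1 q.1.2 (u + 1) (by omega) (by omega),
      bJs_mid m mm c.1.1 q.1.2 (u + 2) (by omega) (by omega)]
    have e1 : u + 1 - 1 = u := by omega
    have e2 : u + 2 - 1 = u + 1 := by omega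
    rw [e1, e2]
    exact (congrFun (congrFun (roc_shift hM (c.2 u hu)) ((c.1.1 u).2))
      ((c.1.1 (u + 1)).2)).symm

end Chunk3

section Chunk4

/-- Decomposition of `C`-class paths. -/
def eqC (n k : ℕ) : (Σ _l : Fin n, QT n k) ≃ {q : QT n k // phi1 n k q} where
  toFun p := ⟨⟨(conss 1 p.2.1.1, conss p.1 p.2.1.2),
    ⟨fun t => by cases t with
      | zero => exact le_rfl
      | succ u => exact p.2.2.1 u,
     (inPk_shift (N := 1) (js := p.2.1.2) (js' := conss p.1 p.2.1.2)
       (fun t => by rw [Nat.add_comm]; rfl)).mp p.2.2.2⟩⟩, rfl⟩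
  invFun q := ⟨q.1.1.2 0, ⟨(fun t => q.1.1.1 (t + 1), fun t => q.1.1.2 (t + 1)),
    ⟨fun t => q.1.2.1 (t + 1),
     (inPk_shift (N := 1) (js := fun t => q.1.1.2 (t + 1)) (js' := q.1.1.2)
       (fun t => by rw [Nat.add_comm])).mpr q.1.2.2⟩⟩⟩
  left_inv p := rfl
  right_inv q := by
    refine Subtype.ext (Subtype.ext (Prod.ext ?_ ?_))
    · funext t
      cases t with
      | zero => exact q.2.symm
      | succ u => rfl
    · funext t
      cases t with
      | zero => rfl
      | succ u => rfl

/-- Decomposition of `A`-class paths. -/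
def eqA (n k : ℕ) : (Σ _l : Fin n, QT n k) ≃ {q : Sub2 n k // ¬ phi3 n k q} where
  toFun p := ⟨⟨⟨⟨(conss 2 (fun t => p.2.1.1 t + 1), conss p.1 p.2.1.2),
    ⟨fun t => by cases t with
      | zero => exact (by omega : (1 : ℕ) ≤ 2)
      | succ u => exact (by omega : 1 ≤ p.2.1.1 u + 1),
     (inPk_shift (N := 1) (js := p.2.1.2) (js' := conss p.1 p.2.1.2)
       (fun t => by rw [Nat.add_comm]; rfl)).mp p.2.2.2⟩⟩,
    fun h => by exact absurd (show (2 : ℕ) = 1 from h) (by omega)⟩, rfl⟩,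
    by
      rintro ⟨T, hT1, hT⟩
      cases T with
      | zero => omega
      | succ u =>
        have h1 : p.2.1.1 u + 1 = 1 := hT
        have h2 := p.2.2.1 u
        omega⟩
  invFun x := ⟨x.1.1.1.1.2 0, ⟨(fun t => x.1.1.1.1.1 (t + 1) - 1,
      fun t => x.1.1.1.1.2 (t + 1)),
    ⟨fun t => by
      show 1 ≤ x.1.1.1.1.1 (t + 1) - 1
      have h1 := x.1.1.1.2.1 (t + 1)
      have h2 : x.1.1.1.1.1 (t + 1) ≠ 1 := fun h => x.2 ⟨t + 1, by omega, h⟩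
      omega,
     (inPk_shift (N := 1) (js := fun t => x.1.1.1.1.2 (t + 1)) (js' := x.1.1.1.1.2)
       (fun t => by rw [Nat.add_comm])).mpr x.1.1.1.2.2⟩⟩⟩
  left_inv p := by
    show (⟨p.1, _⟩ : Σ _l : Fin n, QT n k) = ⟨p.1, p.2⟩
    refine congrArg (Sigma.mk p.1) (Subtype.ext (Prod.ext ?_ ?_))
    · funext t
      show p.2.1.1 t + 1 - 1 = p.2.1.1 t
      omega
    · rfl
  right_inv x := by
    refine Subtype.ext (Subtype.ext (Subtype.ext (Subtype.ext (Prod.ext ?_ ?_))))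
    · funext t
      cases t with
      | zero => exact x.1.2.symm
      | succ u =>
        show x.1.1.1.1.1 (u + 1) - 1 + 1 = x.1.1.1.1.1 (u + 1)
        have h1 := x.1.1.1.2.1 (u + 1)
        omega
    · funext t
      cases t with
      | zero => rfl
      | succ u => rfl

lemma bHs_at_one {n : ℕ} {l : Fin n} (mm : ℕ) (c : DgT l mm) (hq : ℕ → ℕ) :
    bHs mm c.1.1 hq (mm + 1) = 1 := by
  rw [bHs_mid mm c.1.1 hq (mm + 1) (by omega) (by omega)]
  have e1 : mm + 1 - 1 = mm := by omega
  rw [e1, c.1.2 mm le_rfl]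

lemma bHs_ne_one {n : ℕ} {l : Fin n} (mm : ℕ) (c : DgT l mm) (hq : ℕ → ℕ) (T : ℕ)
    (h1 : 1 ≤ T) (h2 : T ≤ mm) : bHs mm c.1.1 hq T ≠ 1 := by
  rw [bHs_mid mm c.1.1 hq T (by omega) (by omega)]
  have := c.2 (T - 1) (by omega)
  omega

/-- The built path of an `A·(M*)`-class index. -/
def toS {n k : ℕ} : Idx n k → {q : Sub2 n k // phi3 n k q}
  | ⟨l, m, mm, c, q⟩ =>
    ⟨⟨⟨⟨(bHs mm c.1.1 q.1.1, bJs m mm c.1.1 q.1.2),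
      ⟨by
        intro t
        show 1 ≤ bHs mm c.1.1 q.1.1 t
        unfold bHs
        split_ifs with h1 h2
        · omega
        · omega
        · exact q.2.1 _,
       (inPk_shift (N := mm + 2) (js := q.1.2) (js' := bJs m mm c.1.1 q.1.2)
         (fun t => bJs_top' m mm c.1.1 q.1.2 t)).mp q.2.2⟩⟩,
      fun h => by exact absurd (show (2 : ℕ) = 1 from h) (by omega)⟩, rfl⟩,
    ⟨mm + 1, by omega, bHs_at_one mm c q.1.1⟩⟩

lemma toS_inj {n k : ℕ} : Function.Injective (toS (n := n) (k := k)) := by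
  rintro ⟨l, m, mm, c, q⟩ ⟨l', m', mm', c', q'⟩ h
  have hpair : ((bHs mm c.1.1 q.1.1, bJs m mm c.1.1 q.1.2) : (ℕ → ℕ) × (ℕ → Fin n))
      = (bHs mm' c'.1.1 q'.1.1, bJs m' mm' c'.1.1 q'.1.2) :=
    congrArg (fun y : {q : Sub2 n k // phi3 n k q} => y.1.1.1.1) h
  have hhs : bHs mm c.1.1 q.1.1 = bHs mm' c'.1.1 q'.1.1 := congrArg Prod.fst hpair
  have hjs : bJs m mm c.1.1 q.1.2 = bJs m' mm' c'.1.1 q'.1.2 := congrArg Prod.snd hpair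
  have hmm : mm = mm' := by
    by_contra hne
    rcases Nat.lt_or_ge mm mm' with hlt | hge
    · exact bHs_ne_one mm' c' q'.1.1 (mm + 1) (by omega) (by omega)
        ((congrFun hhs (mm + 1)).symm.trans (bHs_at_one mm c q.1.1))
    · exact bHs_ne_one mm c q.1.1 (mm' + 1) (by omega) (by omega)
        ((congrFun hhs (mm' + 1)).trans (bHs_at_one mm' c' q'.1.1))
  subst hmm
  have hl : l = l' := by
    have e1 : bJs m mm c.1.1 q.1.2 (mm + 1) = l := by
      rw [bJs_mid m mm c.1.1 q.1.2 (mm + 1) (by omega) (by omega)]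
      have e : mm + 1 - 1 = mm := by omega
      rw [e, c.1.2 mm le_rfl]
    have e2 : bJs m' mm c'.1.1 q'.1.2 (mm + 1) = l' := by
      rw [bJs_mid m' mm c'.1.1 q'.1.2 (mm + 1) (by omega) (by omega)]
      have e : mm + 1 - 1 = mm := by omega
      rw [e, c'.1.2 mm le_rfl]
    exact e1.symm.trans ((congrFun hjs (mm + 1)).trans e2)
  subst hl
  have hm : m = m' := by
    have := congrFun hjs 0
    exact this
  subst hm
  have hc : c = c' := by
    refine Subtype.ext (Subtype.ext (funext fun t => ?_))
    by_cases ht : t < mm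
    · have f1 := congrFun hhs (t + 1)
      rw [bHs_mid mm c.1.1 q.1.1 (t + 1) (by omega) (by omega),
        bHs_mid mm c'.1.1 q'.1.1 (t + 1) (by omega) (by omega)] at f1
      have f2 := congrFun hjs (t + 1)
      rw [bJs_mid m mm c.1.1 q.1.2 (t + 1) (by omega) (by omega),
        bJs_mid m mm c'.1.1 q'.1.2 (t + 1) (by omega) (by omega)] at f2
      have e : t + 1 - 1 = t := by omega
      rw [e] at f1 f2
      exact Prod.ext (by omega) f2
    · rw [c.1.2 t (by omega), c'.1.2 t (by omega)]
  subst hc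
  have hq : q = q' := by
    refine Subtype.ext (Prod.ext ?_ ?_)
    · funext t
      have f1 := congrFun hhs (mm + 2 + t)
      rw [bHs_top', bHs_top'] at f1
      exact f1
    · funext t
      have f2 := congrFun hjs (mm + 2 + t)
      rw [bJs_top', bJs_top'] at f2
      exact f2
  subst hq
  rfl

lemma toS_surj {n k : ℕ} : Function.Surjective (toS (n := n) (k := k)) := by
  rintro ⟨⟨⟨⟨⟨hs, js⟩, hlev, hink⟩, hn1⟩, h2⟩, h3⟩
  have h3' : ∃ T, 1 ≤ T ∧ hs T = 1 := h3
  classical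
  obtain ⟨T, hT, hmin⟩ :
      ∃ T, (1 ≤ T ∧ hs T = 1) ∧ ∀ T', T' < T → ¬(1 ≤ T' ∧ hs T' = 1) :=
    ⟨Nat.find h3', Nat.find_spec h3', fun T' hlt => Nat.find_min h3' hlt⟩
  have h2' : hs 0 = 2 := h2
  refine ⟨⟨js T, js 0, T - 1,
    ⟨⟨fun t => if t < T - 1 then (hs (t + 1) - 1, js (t + 1)) else ((0 : ℕ), js T),
      fun t ht => if_neg (by omega)⟩,
     fun t ht => by
       show 1 ≤ (if t < T - 1 then (hs (t + 1) - 1, js (t + 1))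
         else ((0 : ℕ), js T)).1
       rw [if_pos ht]
       show 1 ≤ hs (t + 1) - 1
       have ha : 1 ≤ hs (t + 1) := hlev (t + 1)
       have hc : hs (t + 1) ≠ 1 := fun hE => hmin (t + 1) (by omega) ⟨by omega, hE⟩
       omega⟩,
    ⟨(fun t => hs (T + 1 + t), fun t => js (T + 1 + t)),
     ⟨fun t => hlev (T + 1 + t),
      (inPk_shift (N := T + 1) (js := fun t => js (T + 1 + t)) (js' := js)
        (fun t => rfl)).mpr hink⟩⟩⟩, ?_⟩
  refine Subtype.ext (Subtype.ext (Subtype.ext (Subtype.ext (Prod.ext ?_ ?_))))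
  · show bHs (T - 1)
      (fun u => if u < T - 1 then (hs (u + 1) - 1, js (u + 1)) else ((0 : ℕ), js T))
      (fun u => hs (T + 1 + u)) = hs
    funext t
    by_cases ht0 : t = 0
    · subst ht0
      exact h2'.symm
    · by_cases htT : t ≤ (T - 1) + 1
      · rw [bHs_mid (T - 1) _ _ t (by omega) htT]
        by_cases htt : t - 1 < T - 1
        · rw [if_pos htt]
          show hs (t - 1 + 1) - 1 + 1 = hs t
          have e : t - 1 + 1 = t := by omega
          rw [e]
          have hb : 1 ≤ hs t := hlev t
          omega
        · rw [if_neg htt]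
          show (1 : ℕ) = hs t
          have e : t = T := by omega
          rw [e]
          exact hT.2.symm
      · rw [bHs_tope (T - 1) _ _ t (by omega)]
        show hs (T + 1 + (t - (T - 1 + 2))) = hs t
        congr 1
        omega
  · show bJs (js 0) (T - 1)
      (fun u => if u < T - 1 then (hs (u + 1) - 1, js (u + 1)) else ((0 : ℕ), js T))
      (fun u => js (T + 1 + u)) = js
    funext t
    by_cases ht0 : t = 0
    · subst ht0
      rfl
    · by_cases htT : t ≤ (T - 1) + 1
      · rw [bJs_mid (js 0) (T - 1) _ _ t (by omega) htT]
        by_cases htt : t - 1 < T - 1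
        · rw [if_pos htt]
          show js (t - 1 + 1) = js t
          congr 1
          omega
        · rw [if_neg htt]
          show js T = js t
          congr 1
          omega
      · rw [bJs_tope (js 0) (T - 1) _ _ t (by omega)]
        show js (T + 1 + (t - (T - 1 + 2))) = js t
        congr 1
        omega

/-- Decomposition of `A·(M*)`-class paths. -/
noncomputable def eqS (n k : ℕ) : Idx n k ≃ {q : Sub2 n k // phi3 n k q} :=
  Equiv.ofBijective toS ⟨toS_inj, toS_surj⟩

end Chunk4

end Stmt6Aux

/-- Let `(S, V)` be a complete semiring-semimodule pair,
`M ∈ (S^{n×n})^{p*×p*}` a roc matrix with counter symbol `p`, and `0 ≤ k ≤ n`.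
Then `(M^{ω,k})_p = (M_{p,p²} + M_{p,p²}(M*)_{p,ε} + M_{p,p}) · (M^{ω,k})_p`. -/
theorem stmt_6 {S V : Type} (R : CSOps S) (P : CPOps S V) (hR : R.IsComplete)
    (hP : P.IsComplete R) {n : ℕ} (hn : 1 ≤ n) (M : IMat n S) (hM : IsRoc R M)
    (k : ℕ) (hk : k ≤ n) :
    mOmegaK P M k 1 =
      matVec P (bAdd R (bAdd R (M 1 2) (bMul R (M 1 2) (iStar R M 1 0))) (M 1 1))
        (mOmegaK P M k 1) := by
  classical
  funext a
  -- the three one-step expansion lemmas for the `A·(M*)` term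
  have Sa1 : ∀ l : Fin n,
      P.smul (bMul R (M 1 2) (iStar R M 1 0) a l) (mOmegaK P M k 1 l)
        = P.vSum (fun m : Fin n => P.smul (M 1 2 a m)
            (P.smul (iStar R M 1 0 m l) (mOmegaK P M k 1 l))) := by
    intro l
    show P.smul (R.iSum (fun m : Fin n => R.mul (M 1 2 a m) (iStar R M 1 0 m l)))
      (mOmegaK P M k 1 l) = _
    rw [hP.iSum_smul]
    exact hP.vSum_congr (fun m => hP.mul_smul _ _ _)
  have Sa2 : ∀ (l m : Fin n),
      P.smul (iStar R M 1 0 m l) (mOmegaK P M k 1 l)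
        = P.vSum (fun mm : ℕ =>
            P.smul (iMatPow R M (mm + 1) 1 0 m l) (mOmegaK P M k 1 l)) := by
    intro l m
    show P.smul (R.iSum (fun mm : ℕ => iMatPow R M mm 1 0 m l))
      (mOmegaK P M k 1 l) = _
    rw [hP.iSum_smul]
    refine hP.vSum_nat_succ _ ?_
    show P.smul (iMatOne R 1 0 m l) (mOmegaK P M k 1 l) = P.vzero
    have h0 : iMatOne R 1 0 m l = R.zero := by simp [iMatOne, bZero]
    rw [h0, hP.zero_smul]
  have Sa3 : ∀ (l m : Fin n) (mm : ℕ),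
      P.smul (iMatPow R M (mm + 1) 1 0 m l) (mOmegaK P M k 1 l)
        = P.vSum (fun c : DgT l mm => P.vSum (fun q : QT n k =>
            P.smul (R.rangeProd (pathEntry M 1 m (fun t => (c.1.1 t).1)
                (fun t => (c.1.1 t).2)) 0 (mm + 1))
              (P.iProd (pathEntry M 1 l q.1.1 q.1.2)))) := by
    intro l m mm
    calc P.smul (iMatPow R M (mm + 1) 1 0 m l) (mOmegaK P M k 1 l)
        = P.vSum (fun c : {c : ℕ → ℕ × Fin n // ∀ t, mm ≤ t → c t = ((0 : ℕ), l)} =>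
            P.smul (R.rangeProd (pathEntry M 1 m (fun t => (c.1 t).1)
                (fun t => (c.1 t).2)) 0 (mm + 1)) (mOmegaK P M k 1 l)) := by
          rw [pow_expand hR M mm 1 m 0 l]
          exact hP.iSum_smul _ _
      _ = P.vSum (fun c : DgT l mm =>
            P.smul (R.rangeProd (pathEntry M 1 m (fun t => (c.1.1 t).1)
                (fun t => (c.1.1 t).2)) 0 (mm + 1)) (mOmegaK P M k 1 l)) := by
          refine hP.vSum_drop
            (fun c : {c : ℕ → ℕ × Fin n // ∀ t, mm ≤ t → c t = ((0 : ℕ), l)} =>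
              P.smul (R.rangeProd (pathEntry M 1 m (fun t => (c.1 t).1)
                  (fun t => (c.1 t).2)) 0 (mm + 1)) (mOmegaK P M k 1 l))
            (fun c => ∀ t, t < mm → 1 ≤ (c.1 t).1) ?_
          intro c hbad
          have hex : ∃ t, t < mm ∧ (c.1 t).1 = 0 := by
            by_contra hne
            push_neg at hne
            exact hbad (fun t ht => by have := hne t ht; omega)
          obtain ⟨t, ht, h0⟩ := hex
          have hw : R.rangeProd (pathEntry M 1 m (fun u => (c.1 u).1)
              (fun u => (c.1 u).2)) 0 (mm + 1) = R.zero := by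
            refine rangeProd_eq_zero hR (mm + 1) _ (t + 1) (by omega) ?_
            show M ((c.1 t).1) ((c.1 (t + 1)).1) ((c.1 t).2) ((c.1 (t + 1)).2)
              = R.zero
            rw [h0, hM.2 0 ((c.1 (t + 1)).1) (Or.inl rfl)]
            rfl
          show P.smul (R.rangeProd (pathEntry M 1 m (fun u => (c.1 u).1)
              (fun u => (c.1 u).2)) 0 (mm + 1)) (mOmegaK P M k 1 l) = P.vzero
          rw [hw, hP.zero_smul]
      _ = P.vSum (fun c : DgT l mm => P.vSum (fun q : QT n k =>
            P.smul (R.rangeProd (pathEntry M 1 m (fun t => (c.1.1 t).1)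
                (fun t => (c.1.1 t).2)) 0 (mm + 1))
              (P.iProd (pathEntry M 1 l q.1.1 q.1.2)))) :=
          hP.vSum_congr (fun c => by
            show P.smul _ (P.vSum (fun q : QT n k =>
              P.iProd (pathEntry M 1 l q.1.1 q.1.2))) = _
            exact hP.smul_vSum _ _)
  -- the three class identities
  have hC : P.vSum (fun l : Fin n => P.smul (M 1 1 a l) (mOmegaK P M k 1 l))
      = P.vSum (fun i : {q : QT n k // phi1 n k q} =>
          P.iProd (pathEntry M 1 a i.1.1.1 i.1.1.2)) := by
    calc P.vSum (fun l : Fin n => P.smul (M 1 1 a l) (mOmegaK P M k 1 l))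
        = P.vSum (fun l : Fin n => P.vSum (fun q : QT n k =>
            P.smul (M 1 1 a l) (P.iProd (pathEntry M 1 l q.1.1 q.1.2)))) :=
          hP.vSum_congr (fun l => by
            show P.smul (M 1 1 a l) (P.vSum (fun q : QT n k =>
              P.iProd (pathEntry M 1 l q.1.1 q.1.2))) = _
            exact hP.smul_vSum _ _)
      _ = P.vSum (fun l : Fin n => P.vSum (fun q : QT n k =>
            P.iProd (pathEntry M 1 a (conss 1 q.1.1) (conss l q.1.2)))) :=
          hP.vSum_congr (fun l => hP.vSum_congr (fun q => wC hP M a l q))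
      _ = P.vSum (fun p : Σ _l : Fin n, QT n k =>
            P.iProd (pathEntry M 1 a (conss 1 p.2.1.1) (conss p.1 p.2.1.2))) :=
          hP.vSum_sigma (fun p : Σ _l : Fin n, QT n k =>
            P.iProd (pathEntry M 1 a (conss 1 p.2.1.1) (conss p.1 p.2.1.2)))
      _ = _ := hP.vSum_equiv (eqC n k)
            (fun i => P.iProd (pathEntry M 1 a i.1.1.1 i.1.1.2))
  have hA : P.vSum (fun l : Fin n => P.smul (M 1 2 a l) (mOmegaK P M k 1 l))
      = P.vSum (fun i : {q : Sub2 n k // ¬ phi3 n k q} =>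
          P.iProd (pathEntry M 1 a i.1.1.1.1.1 i.1.1.1.1.2)) := by
    calc P.vSum (fun l : Fin n => P.smul (M 1 2 a l) (mOmegaK P M k 1 l))
        = P.vSum (fun l : Fin n => P.vSum (fun q : QT n k =>
            P.smul (M 1 2 a l) (P.iProd (pathEntry M 1 l q.1.1 q.1.2)))) :=
          hP.vSum_congr (fun l => by
            show P.smul (M 1 2 a l) (P.vSum (fun q : QT n k =>
              P.iProd (pathEntry M 1 l q.1.1 q.1.2))) = _
            exact hP.smul_vSum _ _)
      _ = P.vSum (fun l : Fin n => P.vSum (fun q : QT n k =>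
            P.iProd (pathEntry M 1 a (conss 2 (fun t => q.1.1 t + 1))
              (conss l q.1.2)))) :=
          hP.vSum_congr (fun l => hP.vSum_congr (fun q => wA hP hM a l q))
      _ = P.vSum (fun p : Σ _l : Fin n, QT n k =>
            P.iProd (pathEntry M 1 a (conss 2 (fun t => p.2.1.1 t + 1))
              (conss p.1 p.2.1.2))) :=
          hP.vSum_sigma (fun p : Σ _l : Fin n, QT n k =>
            P.iProd (pathEntry M 1 a (conss 2 (fun t => p.2.1.1 t + 1))
              (conss p.1 p.2.1.2)))
      _ = _ := hP.vSum_equiv (eqA n k)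
            (fun i => P.iProd (pathEntry M 1 a i.1.1.1.1.1 i.1.1.1.1.2))
  have hS : P.vSum (fun l : Fin n =>
        P.smul (bMul R (M 1 2) (iStar R M 1 0) a l) (mOmegaK P M k 1 l))
      = P.vSum (fun i : {q : Sub2 n k // phi3 n k q} =>
          P.iProd (pathEntry M 1 a i.1.1.1.1.1 i.1.1.1.1.2)) := by
    calc P.vSum (fun l : Fin n =>
          P.smul (bMul R (M 1 2) (iStar R M 1 0) a l) (mOmegaK P M k 1 l))
        = P.vSum (fun l : Fin n => P.vSum (fun m : Fin n =>
            P.smul (M 1 2 a m) (P.smul (iStar R M 1 0 m l) (mOmegaK P M k 1 l)))) :=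
          hP.vSum_congr Sa1
      _ = P.vSum (fun l : Fin n => P.vSum (fun m : Fin n =>
            P.smul (M 1 2 a m) (P.vSum (fun mm : ℕ =>
              P.smul (iMatPow R M (mm + 1) 1 0 m l) (mOmegaK P M k 1 l))))) :=
          hP.vSum_congr (fun l => hP.vSum_congr (fun m =>
            congrArg (P.smul (M 1 2 a m)) (Sa2 l m)))
      _ = P.vSum (fun l : Fin n => P.vSum (fun m : Fin n => P.vSum (fun mm : ℕ =>
            P.smul (M 1 2 a m)
              (P.smul (iMatPow R M (mm + 1) 1 0 m l) (mOmegaK P M k 1 l))))) :=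
          hP.vSum_congr (fun l => hP.vSum_congr (fun m => hP.smul_vSum _ _))
      _ = P.vSum (fun l : Fin n => P.vSum (fun m : Fin n => P.vSum (fun mm : ℕ =>
            P.smul (M 1 2 a m) (P.vSum (fun c : DgT l mm => P.vSum (fun q : QT n k =>
              P.smul (R.rangeProd (pathEntry M 1 m (fun t => (c.1.1 t).1)
                  (fun t => (c.1.1 t).2)) 0 (mm + 1))
                (P.iProd (pathEntry M 1 l q.1.1 q.1.2)))))))) :=
          hP.vSum_congr (fun l => hP.vSum_congr (fun m => hP.vSum_congr (fun mm =>
            congrArg (P.smul (M 1 2 a m)) (Sa3 l m mm))))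
      _ = P.vSum (fun l : Fin n => P.vSum (fun m : Fin n => P.vSum (fun mm : ℕ =>
            P.vSum (fun c : DgT l mm => P.smul (M 1 2 a m) (P.vSum (fun q : QT n k =>
              P.smul (R.rangeProd (pathEntry M 1 m (fun t => (c.1.1 t).1)
                  (fun t => (c.1.1 t).2)) 0 (mm + 1))
                (P.iProd (pathEntry M 1 l q.1.1 q.1.2)))))))) :=
          hP.vSum_congr (fun l => hP.vSum_congr (fun m => hP.vSum_congr (fun mm =>
            hP.smul_vSum _ _)))
      _ = P.vSum (fun l : Fin n => P.vSum (fun m : Fin n => P.vSum (fun mm : ℕ =>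
            P.vSum (fun c : DgT l mm => P.vSum (fun q : QT n k =>
              P.smul (M 1 2 a m)
                (P.smul (R.rangeProd (pathEntry M 1 m (fun t => (c.1.1 t).1)
                    (fun t => (c.1.1 t).2)) 0 (mm + 1))
                  (P.iProd (pathEntry M 1 l q.1.1 q.1.2)))))))) :=
          hP.vSum_congr (fun l => hP.vSum_congr (fun m => hP.vSum_congr (fun mm =>
            hP.vSum_congr (fun c => hP.smul_vSum _ _))))
      _ = P.vSum (fun l : Fin n => P.vSum (fun m : Fin n => P.vSum (fun mm : ℕ =>
            P.vSum (fun c : DgT l mm => P.vSum (fun q : QT n k =>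
              P.iProd (pathEntry M 1 a (bHs mm c.1.1 q.1.1)
                (bJs m mm c.1.1 q.1.2))))))) :=
          hP.vSum_congr (fun l => hP.vSum_congr (fun m => hP.vSum_congr (fun mm =>
            hP.vSum_congr (fun c => hP.vSum_congr (fun q =>
              wS hR hP hM a l m mm c q)))))
      _ = P.vSum (fun l : Fin n => P.vSum (fun m : Fin n => P.vSum (fun mm : ℕ =>
            P.vSum (fun s : Σ _c : DgT l mm, QT n k =>
              P.iProd (pathEntry M 1 a (bHs mm s.1.1.1 s.2.1.1)
                (bJs m mm s.1.1.1 s.2.1.2)))))) :=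
          hP.vSum_congr (fun l => hP.vSum_congr (fun m => hP.vSum_congr (fun mm =>
            hP.vSum_sigma (fun s : Σ _c : DgT l mm, QT n k =>
              P.iProd (pathEntry M 1 a (bHs mm s.1.1.1 s.2.1.1)
                (bJs m mm s.1.1.1 s.2.1.2))))))
      _ = P.vSum (fun l : Fin n => P.vSum (fun m : Fin n =>
            P.vSum (fun s : Σ mm : ℕ, Σ _c : DgT l mm, QT n k =>
              P.iProd (pathEntry M 1 a (bHs s.1 s.2.1.1.1 s.2.2.1.1)
                (bJs m s.1 s.2.1.1.1 s.2.2.1.2))))) :=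
          hP.vSum_congr (fun l => hP.vSum_congr (fun m =>
            hP.vSum_sigma (fun s : Σ mm : ℕ, Σ _c : DgT l mm, QT n k =>
              P.iProd (pathEntry M 1 a (bHs s.1 s.2.1.1.1 s.2.2.1.1)
                (bJs m s.1 s.2.1.1.1 s.2.2.1.2)))))
      _ = P.vSum (fun l : Fin n =>
            P.vSum (fun s : Σ _m : Fin n, Σ mm : ℕ, Σ _c : DgT l mm, QT n k =>
              P.iProd (pathEntry M 1 a (bHs s.2.1 s.2.2.1.1.1 s.2.2.2.1.1)
                (bJs s.1 s.2.1 s.2.2.1.1.1 s.2.2.2.1.2)))) :=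
          hP.vSum_congr (fun l =>
            hP.vSum_sigma (fun s : Σ _m : Fin n, Σ mm : ℕ, Σ _c : DgT l mm, QT n k =>
              P.iProd (pathEntry M 1 a (bHs s.2.1 s.2.2.1.1.1 s.2.2.2.1.1)
                (bJs s.1 s.2.1 s.2.2.1.1.1 s.2.2.2.1.2))))
      _ = P.vSum (fun w : Idx n k =>
            P.iProd (pathEntry M 1 a (bHs w.2.2.1 w.2.2.2.1.1.1 w.2.2.2.2.1.1)
              (bJs w.2.1 w.2.2.1 w.2.2.2.1.1.1 w.2.2.2.2.1.2))) :=
          hP.vSum_sigma (fun w : Idx n k =>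
            P.iProd (pathEntry M 1 a (bHs w.2.2.1 w.2.2.2.1.1.1 w.2.2.2.2.1.1)
              (bJs w.2.1 w.2.2.1 w.2.2.2.1.1.1 w.2.2.2.2.1.2)))
      _ = _ := hP.vSum_equiv (eqS n k)
            (fun i => P.iProd (pathEntry M 1 a i.1.1.1.1.1 i.1.1.1.1.2))
  -- splitting the left-hand side
  have hbad0 : P.vSum (fun i : {q : Sub1 n k // ¬ phi2 n k q} =>
      P.iProd (pathEntry M 1 a i.1.1.1.1 i.1.1.1.2)) = P.vzero := by
    have hz : ∀ i : {q : Sub1 n k // ¬ phi2 n k q},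
        P.iProd (pathEntry M 1 a i.1.1.1.1 i.1.1.1.2) = P.vzero := by
      intro i
      refine iProd_zero_first hP _ ?_
      show M 1 (i.1.1.1.1 0) a (i.1.1.1.2 0) = R.zero
      have hge : 1 ≤ i.1.1.1.1 0 := i.1.1.2.1 0
      have hne1 : i.1.1.1.1 0 ≠ 1 := i.1.2
      have hne2 : i.1.1.1.1 0 ≠ 2 := i.2
      rw [hM.2 1 (i.1.1.1.1 0) (Or.inr ⟨by omega, by omega, by omega⟩)]
      rfl
    rw [hP.vSum_congr hz, hP.vSum_zero]
  have hsplit : mOmegaK P M k 1 a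
      = P.vadd (P.vSum (fun i : {q : QT n k // phi1 n k q} =>
            P.iProd (pathEntry M 1 a i.1.1.1 i.1.1.2)))
          (P.vadd (P.vadd
            (P.vSum (fun i : {q : Sub2 n k // phi3 n k q} =>
              P.iProd (pathEntry M 1 a i.1.1.1.1.1 i.1.1.1.1.2)))
            (P.vSum (fun i : {q : Sub2 n k // ¬ phi3 n k q} =>
              P.iProd (pathEntry M 1 a i.1.1.1.1.1 i.1.1.1.1.2))))
            P.vzero) := by
    calc mOmegaK P M k 1 a
        = P.vSum (fun q : QT n k => P.iProd (pathEntry M 1 a q.1.1 q.1.2)) := rfl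
      _ = P.vadd (P.vSum (fun i : {q : QT n k // phi1 n k q} =>
              P.iProd (pathEntry M 1 a i.1.1.1 i.1.1.2)))
            (P.vSum (fun i : Sub1 n k =>
              P.iProd (pathEntry M 1 a i.1.1.1 i.1.1.2))) :=
          hP.vSum_split (fun q : QT n k =>
            P.iProd (pathEntry M 1 a q.1.1 q.1.2)) (phi1 n k)
      _ = P.vadd (P.vSum (fun i : {q : QT n k // phi1 n k q} =>
              P.iProd (pathEntry M 1 a i.1.1.1 i.1.1.2)))
            (P.vadd (P.vSum (fun i : Sub2 n k =>
                P.iProd (pathEntry M 1 a i.1.1.1.1 i.1.1.1.2)))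
              (P.vSum (fun i : {q : Sub1 n k // ¬ phi2 n k q} =>
                P.iProd (pathEntry M 1 a i.1.1.1.1 i.1.1.1.2)))) :=
          congrArg (P.vadd _) (hP.vSum_split (fun i : Sub1 n k =>
            P.iProd (pathEntry M 1 a i.1.1.1 i.1.1.2)) (phi2 n k))
      _ = P.vadd (P.vSum (fun i : {q : QT n k // phi1 n k q} =>
              P.iProd (pathEntry M 1 a i.1.1.1 i.1.1.2)))
            (P.vadd (P.vadd
              (P.vSum (fun i : {q : Sub2 n k // phi3 n k q} =>
                P.iProd (pathEntry M 1 a i.1.1.1.1.1 i.1.1.1.1.2)))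
              (P.vSum (fun i : {q : Sub2 n k // ¬ phi3 n k q} =>
                P.iProd (pathEntry M 1 a i.1.1.1.1.1 i.1.1.1.1.2))))
              (P.vSum (fun i : {q : Sub1 n k // ¬ phi2 n k q} =>
                P.iProd (pathEntry M 1 a i.1.1.1.1 i.1.1.1.2)))) := by
          refine congrArg (P.vadd _) (congrArg (fun v => P.vadd v _) ?_)
          exact hP.vSum_split (fun i : Sub2 n k =>
            P.iProd (pathEntry M 1 a i.1.1.1.1 i.1.1.1.2)) (phi3 n k)
      _ = _ := by rw [hbad0]
  -- reducing the right-hand side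
  have hRHS : matVec P (bAdd R (bAdd R (M 1 2) (bMul R (M 1 2) (iStar R M 1 0)))
        (M 1 1)) (mOmegaK P M k 1) a
      = P.vadd (P.vadd
          (P.vSum (fun l : Fin n => P.smul (M 1 2 a l) (mOmegaK P M k 1 l)))
          (P.vSum (fun l : Fin n =>
            P.smul (bMul R (M 1 2) (iStar R M 1 0) a l) (mOmegaK P M k 1 l))))
          (P.vSum (fun l : Fin n => P.smul (M 1 1 a l) (mOmegaK P M k 1 l))) := by
    calc matVec P (bAdd R (bAdd R (M 1 2) (bMul R (M 1 2) (iStar R M 1 0)))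
          (M 1 1)) (mOmegaK P M k 1) a
        = P.vSum (fun l : Fin n => P.smul
            (R.add (R.add (M 1 2 a l) (bMul R (M 1 2) (iStar R M 1 0) a l))
              (M 1 1 a l)) (mOmegaK P M k 1 l)) := rfl
      _ = P.vSum (fun l : Fin n => P.vadd (P.vadd
            (P.smul (M 1 2 a l) (mOmegaK P M k 1 l))
            (P.smul (bMul R (M 1 2) (iStar R M 1 0) a l) (mOmegaK P M k 1 l)))
            (P.smul (M 1 1 a l) (mOmegaK P M k 1 l))) :=
          hP.vSum_congr (fun l => by rw [hP.add_smul, hP.add_smul])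
      _ = P.vadd (P.vSum (fun l : Fin n => P.vadd
            (P.smul (M 1 2 a l) (mOmegaK P M k 1 l))
            (P.smul (bMul R (M 1 2) (iStar R M 1 0) a l) (mOmegaK P M k 1 l))))
            (P.vSum (fun l : Fin n => P.smul (M 1 1 a l) (mOmegaK P M k 1 l))) :=
          hP.vSum_vadd _ _
      _ = _ := by
          refine congrArg (fun v => P.vadd v _) ?_
          exact hP.vSum_vadd _ _
  have hfin : ∀ u v w : V, P.vadd w (P.vadd (P.vadd u v) P.vzero)
      = P.vadd (P.vadd v u) w := by
    intro u v w
    rw [hP.vadd_zero', hP.vadd_comm u v]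
    exact hP.vadd_comm w (P.vadd v u)
  rw [hsplit, hRHS, hA, hS, hC]
  exact hfin _ _ _
end
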